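/- arXiv:1010.2311 — 4 statements merged into one kernel-verified Lean document; each statement's English description precedes it below -/
import Mathlib

section
/- Let n ≥ 1 and let M be a nonempty, connected, Hausdorff topological space. Let φ : M → ℝⁿ be a quasicovering, i.e. φ is a local homeomorphism and for every smooth path γ : [0,1] → ℝⁿ and every continuous map γ̃ : [0,1) → M satisfying φ ∘ γ̃ = γ on [0,1), the map γ̃ admits a continuous extension to a map [0,1] → M. Then φ is a homeomorphism from M onto ℝⁿ. -/
set_option linter.unusedSectionVars false
set_option linter.unusedVariables false

open Set Metric Topology Filter

section Aux

variable {E : Type*} [NormedAddCommGroup E] [NormedSpace ℝ E]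
variable {M : Type*} [TopologicalSpace M] [T2Space M]
variable {φ : M → E}

/-- straight segment from `c` to `y` -/
noncomputable def qcSeg (c y : E) (t : ℝ) : E := c + t • (y - c)

lemma qcSeg_zero (c y : E) : qcSeg c y 0 = c := by simp [qcSeg]

lemma qcSeg_one (c y : E) : qcSeg c y 1 = y := by simp [qcSeg]

lemma qcSeg_self (c : E) (t : ℝ) : qcSeg c c t = c := by simp [qcSeg]

lemma qcSeg_contDiff (c y : E) : ContDiff ℝ (⊤ : ℕ∞) (qcSeg c y) :=
  contDiff_const.add (contDiff_id.smul contDiff_const)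

lemma qcSeg_continuous (c y : E) : Continuous (qcSeg c y) :=
  (qcSeg_contDiff c y).continuous

lemma qcSeg_continuous_y (c : E) (b : ℝ) : Continuous fun y => qcSeg c y b :=
  continuous_const.add ((continuous_id.sub continuous_const).const_smul b)

lemma qcSeg_dist (c y y' : E) (t : ℝ) (h0 : 0 ≤ t) (h1 : t ≤ 1) :
    dist (qcSeg c y t) (qcSeg c y' t) ≤ dist y y' := by
  simp only [qcSeg, dist_eq_norm]
  have : c + t • (y - c) - (c + t • (y' - c)) = t • (y - y') := by
    rw [add_sub_add_left_eq_sub, ← smul_sub]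
    congr 1
    abel
  rw [this, norm_smul, Real.norm_eq_abs, abs_of_nonneg h0]
  exact mul_le_of_le_one_left (norm_nonneg _) h1

/-- two lifts over φ on an interval agreeing at the left endpoint agree -/
lemma qc_lift_unique (hloc : IsLocalHomeomorph φ) {a b : ℝ}
    {g₁ g₂ : ℝ → M} (h₁ : ContinuousOn g₁ (Icc a b)) (h₂ : ContinuousOn g₂ (Icc a b))
    (he : ∀ t ∈ Icc a b, φ (g₁ t) = φ (g₂ t)) (hab : a ≤ b) (ha : g₁ a = g₂ a) :
    ∀ t ∈ Icc a b, g₁ t = g₂ t := by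
  have := (T2Space.isSeparatedMap φ).eqOn_of_comp_eqOn hloc.isLocallyInjective
    isPreconnected_Icc h₁ h₂ (fun t ht => he t ht) (left_mem_Icc.mpr hab) ha
  exact fun t ht => this ht

/-- pasting of continuous functions on adjacent closed intervals -/
lemma qc_paste {X : Type*} [TopologicalSpace X] {a b c : ℝ} (hab : a ≤ b) (hbc : b ≤ c)
    {f g : ℝ → X} (hf : ContinuousOn f (Icc a b)) (hg : ContinuousOn g (Icc b c))
    (hfg : f b = g b) :
    ContinuousOn (fun t => if t ≤ b then f t else g t) (Icc a c) := by
  rw [← Icc_union_Icc_eq_Icc hab hbc]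
  intro t ht
  apply ContinuousWithinAt.union
  · rcases le_or_gt t b with h | h
    · refine ((hf t ⟨?_, h⟩).congr (fun s hs => if_pos hs.2) (if_pos h))
      rcases ht with ht | ht
      · exact ht.1
      · exact le_trans hab ht.1
    · refine continuousWithinAt_of_notMem_closure ?_
      rw [(isClosed_Icc).closure_eq]
      exact fun hmem => absurd hmem.2 (not_le.mpr h)
  · rcases lt_or_ge t b with h | h
    · refine continuousWithinAt_of_notMem_closure ?_
      rw [(isClosed_Icc).closure_eq]
      exact fun hmem => absurd hmem.1 (not_le.mpr h)
    · have htmem : t ∈ Icc b c := by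
        refine ⟨h, ?_⟩
        rcases ht with ht | ht
        · exact le_trans ht.2 hbc
        · exact ht.2
      refine (hg t htmem).congr (fun s hs => ?_) ?_
      · by_cases hsb : s ≤ b
        · have : s = b := le_antisymm hsb hs.1
          simp [this, hfg]
        · simp [hsb]
      · by_cases htb : t ≤ b
        · have : t = b := le_antisymm htb h
          simp [this, hfg]
        · simp [htb]

/-- existence of lifts of straight segments -/
lemma qc_lift_exists (hloc : IsLocalHomeomorph φ)
    (hext : ∀ γ : ℝ → E, ContDiffOn ℝ (⊤ : ℕ∞) γ (Set.Icc 0 1) →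
      ∀ γt : ℝ → M, ContinuousOn γt (Set.Ico 0 1) →
        (∀ t ∈ Set.Ico (0 : ℝ) 1, φ (γt t) = γ t) →
        ∃ Γ : ℝ → M, ContinuousOn Γ (Set.Icc 0 1) ∧
          ∀ t ∈ Set.Ico (0 : ℝ) 1, Γ t = γt t)
    (p : M) (y : E) :
    ∃ L : ℝ → M, ContinuousOn L (Icc 0 1) ∧ L 0 = p ∧
      ∀ t ∈ Icc (0:ℝ) 1, φ (L t) = qcSeg (φ p) y t := by
  classical
  set f : ℝ → E := qcSeg (φ p) y with hfdef
  set A : Set ℝ := {b | b ∈ Icc (0:ℝ) 1 ∧ ∃ L : ℝ → M, ContinuousOn L (Icc 0 b) ∧ L 0 = p ∧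
    ∀ t ∈ Icc (0:ℝ) b, φ (L t) = f t} with hAdef
  have h0A : (0:ℝ) ∈ A := by
    refine ⟨⟨le_refl 0, zero_le_one⟩, fun _ => p, continuousOn_const, rfl, ?_⟩
    intro t ht
    have : t = 0 := le_antisymm ht.2 ht.1
    simp [this, hfdef, qcSeg_zero]
  have hbdd : BddAbove A := ⟨1, fun b hb => hb.1.2⟩
  have hAne : A.Nonempty := ⟨0, h0A⟩
  set c := sSup A with hcdef
  have hc0 : 0 ≤ c := le_csSup hbdd h0A
  have hc1 : c ≤ 1 := csSup_le hAne (fun b hb => hb.1.2)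
  have hcA : c ∈ A := by
    rcases eq_or_lt_of_le hc0 with h | hcpos
    · rwa [← h]
    have hpick : ∀ t, t ∈ Ico (0:ℝ) c → ∃ b, b ∈ A ∧ t < b := by
      intro t ht
      obtain ⟨b, hbA, hb⟩ := exists_lt_of_lt_csSup hAne ht.2
      exact ⟨b, hbA, hb⟩
    choose! bfun hbfunA hbfunlt using hpick
    haveI : Nonempty M := ⟨p⟩
    have hLex : ∀ b, b ∈ A → ∃ L : ℝ → M, ContinuousOn L (Icc 0 b) ∧ L 0 = p ∧
        ∀ t ∈ Icc (0:ℝ) b, φ (L t) = f t := fun b hb => hb.2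
    choose! Lf hLfc hLf0 hLfφ using hLex
    have hcompat : ∀ b ∈ A, ∀ b' ∈ A, ∀ t ∈ Icc (0:ℝ) (min b b'), Lf b t = Lf b' t := by
      intro b hb b' hb' t ht
      have h1 : ContinuousOn (Lf b) (Icc 0 (min b b')) :=
        (hLfc b hb).mono (Icc_subset_Icc_right (min_le_left _ _))
      have h2 : ContinuousOn (Lf b') (Icc 0 (min b b')) :=
        (hLfc b' hb').mono (Icc_subset_Icc_right (min_le_right _ _))
      have hmin0 : (0:ℝ) ≤ min b b' := le_min hb.1.1 hb'.1.1
      refine qc_lift_unique hloc h1 h2 ?_ hmin0 (by rw [hLf0 b hb, hLf0 b' hb']) t ht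
      intro s hs
      rw [hLfφ b hb s (Icc_subset_Icc_right (min_le_left _ _) hs),
        hLfφ b' hb' s (Icc_subset_Icc_right (min_le_right _ _) hs)]
    set Linf : ℝ → M := fun t => Lf (bfun t) t with hLinfdef
    have hagree : ∀ b ∈ A, ∀ t, t ∈ Icc (0:ℝ) b → t ∈ Ico (0:ℝ) c → Linf t = Lf b t := by
      intro b hb t ht htc
      exact hcompat (bfun t) (hbfunA t htc) b hb t
        ⟨ht.1, le_min (le_of_lt (hbfunlt t htc)) ht.2⟩
    have hLinfc : ContinuousOn Linf (Ico 0 c) := by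
      intro t₀ ht₀
      have hbA := hbfunA t₀ ht₀
      have hblt := hbfunlt t₀ ht₀
      set b := bfun t₀
      have hsub : Ico 0 c ∩ Iio b ⊆ Icc 0 b := fun s hs => ⟨hs.1.1, le_of_lt hs.2⟩
      have h1 : ContinuousWithinAt (Lf b) (Ico 0 c ∩ Iio b) t₀ :=
        ((hLfc b hbA) t₀ ⟨ht₀.1, le_of_lt hblt⟩).mono hsub
      have h2 : ContinuousWithinAt Linf (Ico 0 c ∩ Iio b) t₀ := by
        refine h1.congr (fun s hs => ?_) ?_
        · exact hagree b hbA s (hsub hs) hs.1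
        · exact hagree b hbA t₀ ⟨ht₀.1, le_of_lt hblt⟩ ht₀
      rwa [continuousWithinAt_inter (Iio_mem_nhds hblt)] at h2
    have hLinfφ : ∀ t ∈ Ico (0:ℝ) c, φ (Linf t) = f t := by
      intro t ht
      exact hLfφ (bfun t) (hbfunA t ht) t ⟨ht.1, le_of_lt (hbfunlt t ht)⟩
    have hLinf0 : Linf 0 = p := hLf0 (bfun 0) (hbfunA 0 ⟨le_refl 0, hcpos⟩)
    have hγsm : ContDiffOn ℝ (⊤ : ℕ∞) (fun s => f (c * s)) (Icc 0 1) :=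
      ((qcSeg_contDiff (φ p) y).comp (contDiff_const.mul contDiff_id)).contDiffOn
    have hmaps : MapsTo (fun s => c * s) (Ico (0:ℝ) 1) (Ico 0 c) := by
      intro s hs
      exact ⟨mul_nonneg (le_of_lt hcpos) hs.1, by simpa using mul_lt_mul_of_pos_left hs.2 hcpos⟩
    have hγtc : ContinuousOn (fun s => Linf (c * s)) (Ico 0 1) :=
      hLinfc.comp ((continuous_const.mul continuous_id).continuousOn) hmaps
    have hγtφ : ∀ s ∈ Ico (0:ℝ) 1, φ (Linf (c * s)) = f (c * s) :=
      fun s hs => hLinfφ _ (hmaps hs)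
    obtain ⟨Γ, hΓc, hΓeq⟩ := hext _ hγsm _ hγtc hγtφ
    have hΓφ : ∀ s ∈ Icc (0:ℝ) 1, φ (Γ s) = f (c * s) := by
      intro s hs
      rcases lt_or_eq_of_le hs.2 with h | h
      · rw [hΓeq s ⟨hs.1, h⟩]
        exact hγtφ s ⟨hs.1, h⟩
      · subst h
        haveI : (𝓝[Ico (0:ℝ) 1] (1:ℝ)).NeBot := by
          apply mem_closure_iff_nhdsWithin_neBot.mp
          rw [closure_Ico (by norm_num : (0:ℝ) ≠ 1)]
          exact ⟨zero_le_one, le_refl 1⟩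
        have t1 : Tendsto (fun s => φ (Γ s)) (𝓝[Ico (0:ℝ) 1] 1) (𝓝 (φ (Γ 1))) := by
          have := (hloc.continuous.comp_continuousOn hΓc) 1 (right_mem_Icc.mpr zero_le_one)
          exact this.mono_left (nhdsWithin_mono 1 Ico_subset_Icc_self)
        have t2 : Tendsto (fun s => f (c * s)) (𝓝[Ico (0:ℝ) 1] 1) (𝓝 (f (c * 1))) :=
          (((qcSeg_continuous (φ p) y).comp
            (continuous_const.mul continuous_id)).tendsto 1).mono_left nhdsWithin_le_nhds
        have t1' : Tendsto (fun s => f (c * s)) (𝓝[Ico (0:ℝ) 1] 1) (𝓝 (φ (Γ 1))) := by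
          refine t1.congr' ?_
          filter_upwards [self_mem_nhdsWithin] with s hs
          rw [hΓeq s hs]
          exact hγtφ s hs
        exact tendsto_nhds_unique t1' t2
    have hcne : c ≠ 0 := ne_of_gt hcpos
    refine ⟨⟨hc0, hc1⟩, fun t => Γ (t / c), ?_, ?_, ?_⟩
    · apply hΓc.comp (continuous_id.div_const c).continuousOn
      intro t ht
      exact ⟨div_nonneg ht.1 (le_of_lt hcpos), (div_le_one hcpos).mpr ht.2⟩
    · show Γ ((0:ℝ) / c) = p
      rw [zero_div, hΓeq 0 ⟨le_refl 0, zero_lt_one⟩, mul_zero, hLinf0]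
    · intro t ht
      have hmem : t / c ∈ Icc (0:ℝ) 1 :=
        ⟨div_nonneg ht.1 (le_of_lt hcpos), (div_le_one hcpos).mpr ht.2⟩
      rw [hΓφ _ hmem]
      congr 1
      field_simp
  have hceq : c = 1 := by
    by_contra hne
    have hclt : c < 1 := lt_of_le_of_ne hc1 hne
    obtain ⟨-, L, hLc, hL0, hLφ⟩ := hcA
    obtain ⟨e, heL, heφ⟩ := hloc (L c)
    have hfc : f c ∈ e.target := by
      have h := hLφ c ⟨hc0, le_refl c⟩
      rw [← h, heφ]
      exact e.map_source heL
    have hev : ∀ᶠ t in 𝓝 c, f t ∈ e.target :=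
      (qcSeg_continuous (φ p) y).continuousAt.eventually_mem (e.open_target.mem_nhds hfc)
    obtain ⟨δ, hδpos, hδ⟩ := Metric.eventually_nhds_iff_ball.mp hev
    set b' := min (c + δ/2) 1 with hb'def
    have hcb' : c < b' := lt_min (by linarith) hclt
    have hb'1 : b' ≤ 1 := min_le_right _ _
    have hmem' : ∀ t ∈ Icc c b', f t ∈ e.target := by
      intro t ht
      apply hδ
      rw [mem_ball, Real.dist_eq, abs_lt]
      have h1 : t ≤ c + δ/2 := le_trans ht.2 (min_le_left _ _)
      constructor <;> [linarith [ht.1]; linarith]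
    have hjunction : L c = e.symm (f c) := by
      rw [← hLφ c ⟨hc0, le_refl c⟩, heφ, e.left_inv heL]
    have hL₂c : ContinuousOn (fun t => if t ≤ c then L t else e.symm (f t)) (Icc 0 b') := by
      apply qc_paste hc0 (le_of_lt hcb') hLc ?_ hjunction
      apply e.continuousOn_symm.comp ((qcSeg_continuous (φ p) y).continuousOn)
      exact fun t ht => hmem' t ht
    have hb'A : b' ∈ A := by
      refine ⟨⟨le_trans hc0 (le_of_lt hcb'), hb'1⟩, _, hL₂c, ?_, ?_⟩
      · rw [if_pos hc0]
        exact hL0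
      · intro t ht
        by_cases h : t ≤ c
        · rw [if_pos h]
          exact hLφ t ⟨ht.1, h⟩
        · rw [if_neg h, heφ]
          exact e.right_inv (hmem' t ⟨le_of_lt (not_le.mp h), ht.2⟩)
    have := le_csSup hbdd hb'A
    linarith
  rw [hceq] at hcA
  exact ⟨hcA.2.choose, hcA.2.choose_spec⟩

/-- the inductive predicate: the time-`b` point of lifts towards nearby targets is a
continuous function of the target -/
def qcP (φ : M → E) (p : M) (y₁ : E) (L : ℝ → M) (b : ℝ) : Prop :=
  ∃ U ∈ 𝓝 y₁, ∃ h : E → M, ContinuousOn h U ∧ h y₁ = L b ∧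
    ∀ y ∈ U, ∀ Ly : ℝ → M, ContinuousOn Ly (Icc 0 1) → Ly 0 = p →
      (∀ t ∈ Icc (0:ℝ) 1, φ (Ly t) = qcSeg (φ p) y t) → Ly b = h y

lemma qc_step (hloc : IsLocalHomeomorph φ) (p : M) (y₁ : E)
    (L : ℝ → M) (hLc : ContinuousOn L (Icc 0 1)) (hL0 : L 0 = p)
    (hLφ : ∀ t ∈ Icc (0:ℝ) 1, φ (L t) = qcSeg (φ p) y₁ t)
    {b b' : ℝ} (hb0 : 0 ≤ b) (hbb' : b ≤ b') (hb'1 : b' ≤ 1)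
    (hPb : qcP φ p y₁ L b) (e : OpenPartialHomeomorph M E) (heφ : φ = ⇑e)
    (htarget : ∀ t ∈ Icc b b', qcSeg (φ p) y₁ t ∈ e.target) (hLbe : L b ∈ e.source) :
    qcP φ p y₁ L b' := by
  obtain ⟨U, hU, h, hhc, hhy₁, hhend⟩ := hPb
  have hK : IsCompact (qcSeg (φ p) y₁ '' Icc b b') :=
    isCompact_Icc.image (qcSeg_continuous (φ p) y₁)
  have hKsub : qcSeg (φ p) y₁ '' Icc b b' ⊆ e.target := by
    rintro z ⟨t, ht, rfl⟩
    exact htarget t ht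
  obtain ⟨ε, hεpos, hεsub⟩ := hK.exists_thickening_subset_open e.open_target hKsub
  have hball : ∀ y ∈ ball y₁ ε, ∀ t ∈ Icc b b', qcSeg (φ p) y t ∈ e.target := by
    intro y hy t ht
    apply hεsub
    rw [Metric.mem_thickening_iff]
    refine ⟨qcSeg (φ p) y₁ t, ⟨t, ht, rfl⟩, ?_⟩
    exact lt_of_le_of_lt
      (qcSeg_dist (φ p) y y₁ t (le_trans hb0 ht.1) (le_trans ht.2 hb'1))
      (by rwa [mem_ball] at hy)
  have hCA : ContinuousAt h y₁ := hhc.continuousAt hU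
  have hU' : U ∩ h ⁻¹' e.source ∩ ball y₁ ε ∈ 𝓝 y₁ := by
    refine inter_mem (inter_mem hU ?_) (ball_mem_nhds y₁ hεpos)
    exact hCA.preimage_mem_nhds (e.open_source.mem_nhds (by rw [hhy₁]; exact hLbe))
  have key : ∀ y ∈ U ∩ h ⁻¹' e.source ∩ ball y₁ ε, ∀ Ly : ℝ → M,
      ContinuousOn Ly (Icc 0 1) → Ly 0 = p →
      (∀ t ∈ Icc (0:ℝ) 1, φ (Ly t) = qcSeg (φ p) y t) →
      Ly b' = e.symm (qcSeg (φ p) y b') := by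
    intro y hy Ly hLyc hLy0 hLyφ
    have hyU : y ∈ U := hy.1.1
    have hyhe : h y ∈ e.source := hy.1.2
    have hyb : y ∈ ball y₁ ε := hy.2
    have hLyb : Ly b = h y := hhend y hyU Ly hLyc hLy0 hLyφ
    have g₂c : ContinuousOn (fun t => e.symm (qcSeg (φ p) y t)) (Icc b b') :=
      e.continuousOn_symm.comp (qcSeg_continuous (φ p) y).continuousOn
        (fun t ht => hball y hyb t ht)
    have g₁c : ContinuousOn Ly (Icc b b') := hLyc.mono (Icc_subset_Icc hb0 hb'1)
    have hsec : ∀ z ∈ e.target, φ (e.symm z) = z := by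
      intro z hz
      rw [heφ]
      exact e.right_inv hz
    have heq : ∀ t ∈ Icc b b', φ (Ly t) = φ (e.symm (qcSeg (φ p) y t)) := by
      intro t ht
      rw [hLyφ t ⟨le_trans hb0 ht.1, le_trans ht.2 hb'1⟩, hsec _ (hball y hyb t ht)]
    have hstart : Ly b = e.symm (qcSeg (φ p) y b) := by
      have hφh : φ (h y) = qcSeg (φ p) y b := by
        rw [← hLyb]
        exact hLyφ b ⟨hb0, le_trans hbb' hb'1⟩
      rw [hLyb, ← hφh, heφ, e.left_inv hyhe]
    exact qc_lift_unique hloc g₁c g₂c heq hbb' hstart b' (right_mem_Icc.mpr hbb')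
  have hy₁mem : y₁ ∈ U ∩ h ⁻¹' e.source ∩ ball y₁ ε := mem_of_mem_nhds hU'
  refine ⟨_, hU', fun y => e.symm (qcSeg (φ p) y b'), ?_, ?_, key⟩
  · apply e.continuousOn_symm.comp (qcSeg_continuous_y (φ p) b').continuousOn
    intro y hy
    exact hball y hy.2 b' (right_mem_Icc.mpr hbb')
  · exact (key y₁ hy₁mem L hLc hL0 hLφ).symm

/-- the endpoint of the lift is locally given by a continuous function of the target -/
lemma qc_endpoint_continuous (hloc : IsLocalHomeomorph φ) (p : M) (y₁ : E)
    (L : ℝ → M) (hLc : ContinuousOn L (Icc 0 1)) (hL0 : L 0 = p)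
    (hLφ : ∀ t ∈ Icc (0:ℝ) 1, φ (L t) = qcSeg (φ p) y₁ t) :
    ∃ U ∈ 𝓝 y₁, ∃ h : E → M, ContinuousOn h U ∧
      ∀ y ∈ U, ∀ Ly : ℝ → M, ContinuousOn Ly (Icc 0 1) → Ly 0 = p →
        (∀ t ∈ Icc (0:ℝ) 1, φ (Ly t) = qcSeg (φ p) y t) → Ly 1 = h y := by
  classical
  set B : Set ℝ := {b | b ∈ Icc (0:ℝ) 1 ∧ qcP φ p y₁ L b} with hBdef
  have h0B : (0:ℝ) ∈ B := by
    refine ⟨⟨le_refl 0, zero_le_one⟩, univ, univ_mem, fun _ => p, continuousOn_const,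
      hL0.symm, fun y _ Ly _ hLy0 _ => hLy0⟩
  have hbdd : BddAbove B := ⟨1, fun b hb => hb.1.2⟩
  have hBne : B.Nonempty := ⟨0, h0B⟩
  set c := sSup B with hcdef
  have hc0 : 0 ≤ c := le_csSup hbdd h0B
  have hc1 : c ≤ 1 := csSup_le hBne (fun b hb => hb.1.2)
  have hcI : c ∈ Icc (0:ℝ) 1 := ⟨hc0, hc1⟩
  have hcB : c ∈ B := by
    by_cases hcB' : c ∈ B
    · exact hcB'
    obtain ⟨e, heL, heφ⟩ := hloc (L c)
    have h1 : ∀ᶠ t in 𝓝[Icc (0:ℝ) 1] c, L t ∈ e.source :=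
      (hLc c hcI).eventually (e.open_source.eventually_mem heL)
    obtain ⟨δ₁, hδ₁pos, hδ₁⟩ := Metric.mem_nhdsWithin_iff.mp h1
    have h2 : ∀ᶠ t in 𝓝 c, qcSeg (φ p) y₁ t ∈ e.target := by
      apply (qcSeg_continuous (φ p) y₁).continuousAt.eventually_mem
      apply e.open_target.mem_nhds
      rw [← hLφ c hcI, heφ]
      exact e.map_source heL
    obtain ⟨δ₂, hδ₂pos, hδ₂⟩ := Metric.eventually_nhds_iff_ball.mp h2
    set δ := min δ₁ δ₂ with hδdef
    have hδpos : 0 < δ := lt_min hδ₁pos hδ₂pos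
    obtain ⟨b, hbB, hblt⟩ := exists_lt_of_lt_csSup hBne
      (show c - δ/2 < c by linarith)
    have hbc : b ≤ c := le_csSup hbdd hbB
    refine ⟨hcI, qc_step hloc p y₁ L hLc hL0 hLφ hbB.1.1 hbc hc1 hbB.2 e heφ ?_ ?_⟩
    · intro t ht
      apply hδ₂
      rw [mem_ball, Real.dist_eq, abs_lt]
      have h3 : δ ≤ δ₂ := min_le_right _ _
      constructor <;> [linarith [ht.1]; linarith [ht.2, hc1]]
    · apply hδ₁
      refine ⟨?_, hbB.1⟩
      rw [mem_ball, Real.dist_eq, abs_lt]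
      have h3 : δ ≤ δ₁ := min_le_left _ _
      constructor <;> linarith
  have hceq : c = 1 := by
    by_contra hne
    have hclt : c < 1 := lt_of_le_of_ne hc1 hne
    obtain ⟨e, heL, heφ⟩ := hloc (L c)
    have h2 : ∀ᶠ t in 𝓝 c, qcSeg (φ p) y₁ t ∈ e.target := by
      apply (qcSeg_continuous (φ p) y₁).continuousAt.eventually_mem
      apply e.open_target.mem_nhds
      rw [← hLφ c hcI, heφ]
      exact e.map_source heL
    obtain ⟨δ₂, hδ₂pos, hδ₂⟩ := Metric.eventually_nhds_iff_ball.mp h2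
    set b' := min (c + δ₂/2) 1 with hb'def
    have hcb' : c < b' := lt_min (by linarith) hclt
    have hb'1 : b' ≤ 1 := min_le_right _ _
    have hstep : qcP φ p y₁ L b' := by
      refine qc_step hloc p y₁ L hLc hL0 hLφ hc0 (le_of_lt hcb') hb'1 hcB.2 e heφ ?_ heL
      intro t ht
      apply hδ₂
      rw [mem_ball, Real.dist_eq, abs_lt]
      have h3 : t ≤ c + δ₂/2 := le_trans ht.2 (min_le_left _ _)
      constructor <;> [linarith [ht.1]; linarith]
    have hb'B : b' ∈ B := ⟨⟨le_trans hc0 (le_of_lt hcb'), hb'1⟩, hstep⟩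
    have := le_csSup hbdd hb'B
    linarith
  rw [hceq] at hcB
  obtain ⟨-, U, hU, h, hhc, -, hhend⟩ := hcB
  exact ⟨U, hU, h, hhc, hhend⟩

end Aux

/-- A quasicovering `φ : M → ℝⁿ` (a local homeomorphism such that every
continuous partial lift on `[0,1)` of a smooth path `γ : [0,1] → ℝⁿ` extends continuously
to `[0,1]`) from a nonempty connected Hausdorff space `M` is a homeomorphism onto `ℝⁿ`. -/
theorem quasicovering_homeomorph
    (n : ℕ) (hn : 1 ≤ n)
    (M : Type*) [TopologicalSpace M] [T2Space M] [Nonempty M] [ConnectedSpace M]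
    (φ : M → EuclideanSpace ℝ (Fin n))
    (hloc : IsLocalHomeomorph φ)
    (hext : ∀ γ : ℝ → EuclideanSpace ℝ (Fin n), ContDiffOn ℝ (⊤ : ℕ∞) γ (Set.Icc 0 1) →
      ∀ γt : ℝ → M, ContinuousOn γt (Set.Ico 0 1) →
        (∀ t ∈ Set.Ico (0 : ℝ) 1, φ (γt t) = γ t) →
        ∃ Γ : ℝ → M, ContinuousOn Γ (Set.Icc 0 1) ∧
          ∀ t ∈ Set.Ico (0 : ℝ) 1, Γ t = γt t) :
    ∃ e : M ≃ₜ EuclideanSpace ℝ (Fin n), ⇑e = φ := by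
  classical
  obtain ⟨p₀⟩ := ‹Nonempty M›
  -- chosen lifts from p₀
  choose Lσ hLσC hLσ0 hLσφ using fun y => qc_lift_exists hloc hext p₀ y
  set σ : EuclideanSpace ℝ (Fin n) → M := fun y => Lσ y 1 with hσdef
  have hφσ : ∀ y, φ (σ y) = y := by
    intro y
    have := hLσφ y 1 (by norm_num)
    rwa [qcSeg_one] at this
  have hσcont : Continuous σ := by
    rw [continuous_iff_continuousAt]
    intro y₁
    obtain ⟨U, hU, h, hhc, hh⟩ := qc_endpoint_continuous hloc p₀ y₁ (Lσ y₁)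
      (hLσC y₁) (hLσ0 y₁) (hLσφ y₁)
    have heq : σ =ᶠ[𝓝 y₁] h := by
      filter_upwards [hU] with y hy
      exact hh y hy (Lσ y) (hLσC y) (hLσ0 y) (hLσφ y)
    exact (hhc.continuousAt hU).congr heq.symm
  have hσφ : σ (φ p₀) = p₀ := by
    have hclift : ∀ t ∈ Icc (0:ℝ) 1, Lσ (φ p₀) t = (fun _ => p₀) t := by
      apply qc_lift_unique hloc (hLσC _) continuousOn_const _ zero_le_one
      · rw [hLσ0]
      · intro t ht
        rw [hLσφ _ t ht, qcSeg_self]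
    exact hclift 1 (by norm_num)
  have hσφid : σ ∘ φ = id := by
    apply (T2Space.isSeparatedMap φ).eq_of_comp_eq hloc.isLocallyInjective
      (hσcont.comp hloc.continuous) continuous_id _ p₀ hσφ
    funext m
    simp [Function.comp, hφσ]
  have hbij : Function.Bijective φ := by
    constructor
    · intro a b hab
      have ha := congrFun hσφid a
      have hb := congrFun hσφid b
      simp only [Function.comp_apply, id_eq] at ha hb
      rw [← ha, ← hb, hab]
    · exact fun y => ⟨σ y, hφσ y⟩
  exact ⟨hloc.toHomeomorphOfBijective hbij, rfl⟩
end

section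
/- Let n ≥ 1 and let M be a nonempty, connected smooth n-manifold without boundary. Let φ : M → ℝⁿ be a smooth local diffeomorphism such that for every smooth path γ : [0,1] → ℝⁿ and every continuous map γ̃ : [0,1) → M satisfying φ ∘ γ̃ = γ on [0,1), the map γ̃ admits a continuous extension to a map [0,1] → M. Then φ is a diffeomorphism from M onto ℝⁿ (in particular φ is bijective and its inverse is smooth). -/
set_option linter.unusedSectionVars false
set_option linter.unusedVariables false
set_option linter.deprecated false


open Set Metric Topology Filter

namespace QCaux

variable {F : Type*} [NormedAddCommGroup F] [NormedSpace ℝ F]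

/-- straight segment from `p` to `q` -/
noncomputable def seg (p q : F) (t : ℝ) : F := p + t • (q - p)

lemma seg_zero (p q : F) : seg p q 0 = p := by simp [seg]

lemma seg_one (p q : F) : seg p q 1 = q := by simp [seg]

lemma seg_contDiff (p q : F) : ContDiff ℝ (⊤ : ℕ∞) (seg p q) :=
  contDiff_const.add (contDiff_id.smul contDiff_const)

lemma seg_continuous (p q : F) : Continuous (seg p q) := (seg_contDiff p q).continuous

lemma seg_continuous_right (p : F) (t : ℝ) : Continuous (fun q => seg p q t) := by
  unfold seg; fun_prop

lemma seg_reparam (p q : F) (a t : ℝ) : seg p q (a * t) = seg p (seg p q a) t := by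
  simp only [seg]
  rw [add_sub_cancel_left, smul_smul, mul_comm]

lemma seg_dist_le (p q q' : F) {t : ℝ} (ht : t ∈ Icc (0:ℝ) 1) :
    dist (seg p q' t) (seg p q t) ≤ dist q' q := by
  have : seg p q' t - seg p q t = t • (q' - q) := by
    simp only [seg]; module
  rw [dist_eq_norm, this, norm_smul, dist_eq_norm]
  have h1 : ‖t‖ ≤ 1 := by rw [Real.norm_eq_abs, abs_of_nonneg ht.1]; exact ht.2
  calc ‖t‖ * ‖q' - q‖ ≤ 1 * ‖q' - q‖ := by
        apply mul_le_mul_of_nonneg_right h1 (norm_nonneg _)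
    _ = ‖q' - q‖ := one_mul _

end QCaux

namespace QCaux

lemma continuousOn_union_closed {α β : Type*} [TopologicalSpace α] [TopologicalSpace β]
    {f : α → β} {s t : Set α} (hs : IsClosed s) (ht : IsClosed t) (hfs : ContinuousOn f s)
    (hft : ContinuousOn f t) : ContinuousOn f (s ∪ t) := by
  intro x hx
  have hcwa : ∀ {u : Set α}, IsClosed u → ContinuousOn f u → ContinuousWithinAt f u x := by
    intro u hu hfu
    by_cases h' : x ∈ u
    · exact hfu x h'
    · exact continuousWithinAt_of_notMem_closure (by rwa [hu.closure_eq])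
  exact (hcwa hs hfs).union (hcwa ht hft)

lemma glue_Icc {M : Type*} [TopologicalSpace M] {a b c : ℝ} (hab : a ≤ b) (hbc : b ≤ c)
    {f g : ℝ → M} (hf : ContinuousOn f (Icc a b)) (hg : ContinuousOn g (Icc b c))
    (hfg : f b = g b) :
    ContinuousOn (fun t => if t ≤ b then f t else g t) (Icc a c) := by
  have hunion : Icc a c = Icc a b ∪ Icc b c := (Icc_union_Icc_eq_Icc hab hbc).symm
  rw [hunion]
  apply continuousOn_union_closed isClosed_Icc isClosed_Icc
  · exact hf.congr (fun t htm => by simp [htm.2])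
  · apply hg.congr
    intro t htm
    by_cases h : t ≤ b
    · have : t = b := le_antisymm h htm.1
      simp [this, hfg]
    · simp [h]

variable {F : Type*} [NormedAddCommGroup F] [NormedSpace ℝ F]
variable {M : Type*} [TopologicalSpace M] [T2Space M]

/-- uniqueness of lifts through a local homeomorphism into a Hausdorff space -/
lemma lift_unique {φ : M → F} (hφ : IsLocalHomeomorph φ) {s : Set ℝ} (hs : IsPreconnected s)
    {a b : ℝ → M} (ha : ContinuousOn a s) (hb : ContinuousOn b s)
    (hab : ∀ t ∈ s, φ (a t) = φ (b t)) {t₀ : ℝ} (ht₀ : t₀ ∈ s) (h₀ : a t₀ = b t₀) :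
    EqOn a b s :=
  (T2Space.isSeparatedMap φ).eqOn_of_comp_eqOn hφ.isLocallyInjective hs ha hb hab ht₀ h₀

end QCaux

namespace QCaux

variable {F : Type*} [NormedAddCommGroup F] [NormedSpace ℝ F]
variable {M : Type*} [TopologicalSpace M] [T2Space M]

/-- existence of lifts of straight segments through a quasicovering -/
lemma lift_exists {φ : M → F} (hφ : IsLocalHomeomorph φ)
    (hext : ∀ a b : F, ∀ γt : ℝ → M, ContinuousOn γt (Set.Ico 0 1) →
        (∀ t ∈ Set.Ico (0 : ℝ) 1, φ (γt t) = seg a b t) →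
        ∃ Γ : ℝ → M, ContinuousOn Γ (Set.Icc 0 1) ∧
          ∀ t ∈ Set.Ico (0 : ℝ) 1, Γ t = γt t)
    (x₀ : M) (q : F) :
    ∃ Γ : ℝ → M, ContinuousOn Γ (Icc 0 1) ∧ Γ 0 = x₀ ∧
      ∀ t ∈ Icc (0:ℝ) 1, φ (Γ t) = seg (φ x₀) q t := by
  classical
  set p := φ x₀ with hp
  set γ : ℝ → F := seg p q with hγdef
  set A : Set ℝ := {T | T ∈ Icc (0:ℝ) 1 ∧ ∃ Γ : ℝ → M, ContinuousOn Γ (Icc 0 T) ∧ Γ 0 = x₀ ∧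
      ∀ t ∈ Icc (0:ℝ) T, φ (Γ t) = γ t} with hAdef
  have h0A : (0:ℝ) ∈ A := by
    refine ⟨⟨le_refl 0, zero_le_one⟩, fun _ => x₀, continuousOn_const, rfl, ?_⟩
    intro t ht
    have : t = 0 := le_antisymm ht.2 ht.1
    rw [this, hγdef, seg_zero]
  have hAne : A.Nonempty := ⟨0, h0A⟩
  have hAbdd : BddAbove A := ⟨1, fun T hT => hT.1.2⟩
  set T₀ := sSup A with hT₀def
  have hT₀mem : T₀ ∈ Icc (0:ℝ) 1 := ⟨le_csSup hAbdd h0A, csSup_le hAne (fun T hT => hT.1.2)⟩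
  -- Step 1 : T₀ ∈ A
  have hsupA : T₀ ∈ A := by
    rcases eq_or_lt_of_le hT₀mem.1 with h0 | h0
    · rw [← h0]; exact h0A
    -- 0 < T₀; canonical chosen lifts
    set G0 : ℝ → ℝ → M := fun T =>
      if h : T ∈ A then h.2.choose else fun _ => x₀ with hG0def
    have hG0 : ∀ T, T ∈ A → ContinuousOn (G0 T) (Icc 0 T) ∧ G0 T 0 = x₀ ∧
        ∀ t ∈ Icc (0:ℝ) T, φ (G0 T t) = γ t := by
      intro T h
      simp only [hG0def, dif_pos h]
      exact h.2.choose_spec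
    have compat : ∀ T, T ∈ A → ∀ T', T' ∈ A → T ≤ T' → EqOn (G0 T) (G0 T') (Icc 0 T) := by
      intro T hT T' hT' hle
      obtain ⟨h1c, h10, h1φ⟩ := hG0 T hT
      obtain ⟨h2c, h20, h2φ⟩ := hG0 T' hT'
      refine lift_unique hφ isPreconnected_Icc h1c
        (h2c.mono (Icc_subset_Icc_right hle)) ?_ (left_mem_Icc.mpr hT.1.1) (by rw [h10, h20])
      intro t ht
      rw [h1φ t ht, h2φ t (Icc_subset_Icc_right hle ht)]
    set G : ℝ → M := fun t => if h : ∃ T, T ∈ A ∧ t ≤ T then G0 h.choose t else x₀ with hGdef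
    have hGF : ∀ T, T ∈ A → ∀ t ∈ Icc (0:ℝ) T, G t = G0 T t := by
      intro T hT t ht
      have hex : ∃ T', T' ∈ A ∧ t ≤ T' := ⟨T, hT, ht.2⟩
      have hspec := hex.choose_spec
      simp only [hGdef, dif_pos hex]
      rcases le_total hex.choose T with hle | hle
      · exact (compat hex.choose hspec.1 T hT hle ⟨ht.1, hspec.2⟩)
      · exact (compat T hT hex.choose hspec.1 hle ht).symm
    have hG0x : G 0 = x₀ := by
      rw [hGF 0 h0A 0 ⟨le_rfl, le_rfl⟩, (hG0 0 h0A).2.1]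
    have hGφ : ∀ t ∈ Ico (0:ℝ) T₀, φ (G t) = γ t := by
      intro t ht
      obtain ⟨T, hTA, htT⟩ := exists_lt_of_lt_csSup hAne ht.2
      rw [hGF T hTA t ⟨ht.1, htT.le⟩]
      exact (hG0 T hTA).2.2 t ⟨ht.1, htT.le⟩
    have hGcont : ContinuousOn G (Ico 0 T₀) := by
      intro t ht
      obtain ⟨T, hTA, htT⟩ := exists_lt_of_lt_csSup hAne ht.2
      have h1 := hG0 T hTA
      have hEq : EqOn G (G0 T) (Ico 0 T₀ ∩ Iic T) := fun u hu => hGF T hTA u ⟨hu.1.1, hu.2⟩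
      have hsub : Ico 0 T₀ ∩ Iic T ⊆ Icc 0 T := fun u hu => ⟨hu.1.1, hu.2⟩
      have hcwa : ContinuousWithinAt G (Ico 0 T₀ ∩ Iic T) t :=
        ((h1.1 t ⟨ht.1, htT.le⟩).mono hsub).congr hEq (hGF T hTA t ⟨ht.1, htT.le⟩)
      exact hcwa.mono_of_mem_nhdsWithin (inter_mem_nhdsWithin _ (Iic_mem_nhds htT))
    -- apply the extension property to a reparametrized segment
    set q' := γ T₀ with hq'def
    have hreparam : ∀ s : ℝ, γ (T₀ * s) = seg p q' s := fun s => seg_reparam p q T₀ s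
    obtain ⟨Γ, hΓc, hΓeq⟩ := hext p q' (fun s => G (T₀ * s))
      (by
        apply hGcont.comp ((continuous_const.mul continuous_id).continuousOn)
        intro s hs
        exact ⟨mul_nonneg h0.le hs.1, by
          calc T₀ * s < T₀ * 1 := by
                exact mul_lt_mul_of_pos_left hs.2 h0
            _ = T₀ := mul_one _⟩)
      (by
        intro s hs
        rw [← hreparam s]
        exact hGφ (T₀ * s) ⟨mul_nonneg h0.le hs.1,
          by calc T₀ * s < T₀ * 1 := mul_lt_mul_of_pos_left hs.2 h0
            _ = T₀ := mul_one _⟩)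
    refine ⟨hT₀mem, fun t => Γ (t / T₀), ?_, ?_, ?_⟩
    · apply hΓc.comp (continuous_id.div_const T₀).continuousOn
      intro t ht
      exact ⟨div_nonneg ht.1 h0.le, (div_le_one h0).mpr ht.2⟩
    · have h01 : (0:ℝ) ∈ Ico (0:ℝ) 1 := ⟨le_rfl, zero_lt_one⟩
      simp only [zero_div]
      rw [hΓeq 0 h01]
      simpa using hG0x
    · intro t ht
      rcases lt_or_eq_of_le ht.2 with hlt | heq
      · have hmem : t / T₀ ∈ Ico (0:ℝ) 1 := ⟨div_nonneg ht.1 h0.le, (div_lt_one h0).mpr hlt⟩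
        show φ (Γ (t / T₀)) = γ t
        rw [hΓeq _ hmem]
        have : T₀ * (t / T₀) = t := by
          field_simp
        rw [this]
        exact hGφ t ⟨ht.1, hlt⟩
      -- endpoint: use a limit argument
      · subst heq
        have hTdiv : T₀ / T₀ = 1 := div_self h0.ne'
        show φ (Γ (T₀ / T₀)) = γ T₀
        rw [hTdiv]
        have hne : (𝓝[Ico (0:ℝ) 1] 1).NeBot := by
          rw [← mem_closure_iff_nhdsWithin_neBot, closure_Ico (zero_ne_one)]
          exact ⟨zero_le_one, le_rfl⟩
        have h1 : Filter.Tendsto (fun s => φ (Γ s)) (𝓝[Ico (0:ℝ) 1] 1) (𝓝 (φ (Γ 1))) := by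
          have := (hφ.continuous.comp_continuousOn hΓc) 1 (right_mem_Icc.mpr zero_le_one)
          exact this.mono_left (nhdsWithin_mono 1 Ico_subset_Icc_self)
        have h2 : Filter.Tendsto (fun s => φ (Γ s)) (𝓝[Ico (0:ℝ) 1] 1) (𝓝 (seg p q' 1)) := by
          have hcont : Filter.Tendsto (fun s => seg p q' s) (𝓝[Ico (0:ℝ) 1] 1) (𝓝 (seg p q' 1)) :=
            ((seg_continuous p q').tendsto 1).mono_left nhdsWithin_le_nhds
          apply hcont.congr'
          filter_upwards [self_mem_nhdsWithin] with s hs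
          rw [hΓeq s hs, ← hreparam s]
          exact (hGφ (T₀ * s) ⟨mul_nonneg h0.le hs.1,
            by calc T₀ * s < T₀ * 1 := mul_lt_mul_of_pos_left hs.2 h0
              _ = T₀ := mul_one _⟩).symm
        have := tendsto_nhds_unique h1 h2
        rw [this, seg_one]
  -- Step 2 : T₀ = 1
  have h1A : (1:ℝ) ∈ A := by
    rcases eq_or_lt_of_le hT₀mem.2 with h | h
    · rwa [h] at hsupA
    exfalso
    obtain ⟨_, Λ, hΛc, hΛ0, hΛφ⟩ := hsupA
    set x := Λ T₀ with hxdef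
    obtain ⟨e, hxe, hfe⟩ := hφ x
    have hφx : φ x = γ T₀ := hΛφ T₀ ⟨hT₀mem.1, le_rfl⟩
    have hγT₀ : γ T₀ ∈ e.target := by
      rw [← hφx, hfe]
      exact e.map_source hxe
    have hmemnhds : γ ⁻¹' e.target ∈ 𝓝 T₀ :=
      ((seg_continuous p q).continuousAt).preimage_mem_nhds (e.open_target.mem_nhds hγT₀)
    obtain ⟨ε, hε, hball⟩ := Metric.mem_nhds_iff.mp hmemnhds
    set T' := min 1 (T₀ + ε/2) with hT'def
    have hT₀T' : T₀ < T' := lt_min h (by linarith)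
    have hT'1 : T' ≤ 1 := min_le_left _ _
    have hT'target : ∀ t ∈ Icc T₀ T', γ t ∈ e.target := by
      intro t ht
      apply hball
      rw [mem_ball, Real.dist_eq, abs_of_nonneg (by linarith [ht.1])]
      have : t ≤ T₀ + ε/2 := le_trans ht.2 (le_trans (min_le_right _ _) le_rfl)
      linarith
    have hgc : ContinuousOn (fun t => e.symm (γ t)) (Icc T₀ T') := by
      apply e.continuousOn_symm.comp ((seg_continuous p q).continuousOn)
      intro t ht
      exact hT'target t ht
    have hbdry : Λ T₀ = e.symm (γ T₀) := by
      rw [← hφx, hfe]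
      exact (e.left_inv hxe).symm
    have hT'A : T' ∈ A := by
      refine ⟨⟨le_trans hT₀mem.1 hT₀T'.le, hT'1⟩,
        fun t => if t ≤ T₀ then Λ t else e.symm (γ t), ?_, ?_, ?_⟩
      · exact glue_Icc hT₀mem.1 hT₀T'.le hΛc hgc hbdry
      · simp only [if_pos hT₀mem.1]
        exact hΛ0
      · intro t ht
        by_cases hcase : t ≤ T₀
        · simp only [if_pos hcase]
          exact hΛφ t ⟨ht.1, hcase⟩
        · simp only [if_neg hcase]
          have htmem : γ t ∈ e.target := hT'target t ⟨le_of_not_ge hcase, ht.2⟩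
          rw [hfe]
          exact e.right_inv htmem
    exact absurd (le_csSup hAbdd hT'A) (not_le.mpr hT₀T')
  obtain ⟨_, Γ, hc, h0, hφΓ⟩ := h1A
  exact ⟨Γ, hc, h0, hφΓ⟩

end QCaux

namespace QCaux

variable {F : Type*} [NormedAddCommGroup F] [NormedSpace ℝ F]
variable {M : Type*} [TopologicalSpace M] [T2Space M]

/-- continuity of the endpoint of the lifted segment -/
lemma psi_continuousAt {φ : M → F} (hφ : IsLocalHomeomorph φ) (x₀ : M) (ψ : F → M)
    (hψ : ∀ q' : F, ∃ Γ : ℝ → M, ContinuousOn Γ (Icc 0 1) ∧ Γ 0 = x₀ ∧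
      (∀ t ∈ Icc (0:ℝ) 1, φ (Γ t) = seg (φ x₀) q' t) ∧ Γ 1 = ψ q')
    (q : F) : ContinuousAt ψ q := by
  classical
  set p := φ x₀ with hp
  obtain ⟨Γ, hΓc, hΓ0, hφΓq, hΓψ⟩ := hψ q
  -- choose charts along the lift
  have hch : ∀ t : ℝ, ∃ e : OpenPartialHomeomorph M F, Γ t ∈ e.source ∧ φ = ⇑e := fun t => hφ (Γ t)
  choose e he hfe using hch
  -- choose local radii
  have hδ : ∀ t ∈ Icc (0:ℝ) 1, ∃ δ > 0, ∀ u ∈ Icc (0:ℝ) 1, dist u t < δ → Γ u ∈ (e t).source := by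
    intro t ht
    have hmem : Γ ⁻¹' (e t).source ∈ 𝓝[Icc (0:ℝ) 1] t :=
      (hΓc t ht) ((e t).open_source.mem_nhds (he t))
    obtain ⟨δ, hδpos, hsub⟩ := Metric.mem_nhdsWithin_iff.mp hmem
    exact ⟨δ, hδpos, fun u hu hd => hsub ⟨mem_ball.mpr hd, hu⟩⟩
  choose! δ hδpos hδspec using hδ
  -- Lebesgue number
  obtain ⟨r, hr, hleb⟩ := lebesgue_number_lemma_of_metric (isCompact_Icc (a := (0:ℝ)) (b := 1))
    (fun i : Icc (0:ℝ) 1 => isOpen_ball (x := i.1) (ε := δ i.1))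
    (fun t ht => mem_iUnion.mpr ⟨⟨t, ht⟩, mem_ball_self (hδpos t ht)⟩)
  obtain ⟨N₀, hN₀⟩ := exists_nat_one_div_lt hr
  set N : ℕ := N₀ + 1 with hNdef
  have hNpos : (0:ℝ) < (N:ℝ) := by positivity
  have hNr : (1:ℝ)/(N:ℝ) < r := by
    have : ((N:ℕ):ℝ) = (N₀:ℝ) + 1 := by rw [hNdef, Nat.cast_add, Nat.cast_one]
    rw [this]; exact hN₀
  -- choose charts adapted to the subdivision
  have hEex : ∀ k : ℕ, ∃ E : OpenPartialHomeomorph M F, (φ = ⇑E) ∧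
      (k < N → ∀ u ∈ Icc ((k:ℝ)/N) (((k:ℝ)+1)/N), Γ u ∈ E.source) := by
    intro k
    by_cases hk : k < N
    case neg => exact ⟨e 0, hfe 0, fun h => absurd h hk⟩
    refine ?_
    have hkR : (k:ℝ) + 1 ≤ (N:ℝ) := by exact_mod_cast Nat.succ_le_of_lt hk
    have hkN : (k:ℝ)/N ∈ Icc (0:ℝ) 1 :=
      ⟨div_nonneg k.cast_nonneg hNpos.le, (div_le_one hNpos).mpr (by linarith)⟩
    obtain ⟨i, hi⟩ := hleb ((k:ℝ)/N) hkN
    refine ⟨e i.1, hfe i.1, fun _ => ?_⟩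
    intro u hu
    have hu01 : u ∈ Icc (0:ℝ) 1 :=
      ⟨le_trans hkN.1 hu.1, le_trans hu.2 ((div_le_one hNpos).mpr hkR)⟩
    have hball : u ∈ ball ((k:ℝ)/N) r := by
      rw [mem_ball, Real.dist_eq, abs_of_nonneg (by linarith [hu.1])]
      have h1 : u - (k:ℝ)/N ≤ 1/N := by
        have := hu.2
        have hc : ((k:ℝ)+1)/N - (k:ℝ)/N = 1/N := by field_simp; ring
        linarith [hc ▸ sub_le_sub_right this ((k:ℝ)/N)]
      linarith
    exact hδspec i.1 i.2 u hu01 (mem_ball.mp (hi hball))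
  choose E hEφ hEmem using hEex
  -- uniform thickening radii
  have hεex : ∀ k : ℕ, k < N → ∃ ε > 0, ∀ q' : F, dist q' q < ε →
      ∀ t ∈ Icc ((k:ℝ)/N) (((k:ℝ)+1)/N), seg p q' t ∈ (E k).target := by
    intro k hk
    have hkR : (k:ℝ) + 1 ≤ (N:ℝ) := by exact_mod_cast Nat.succ_le_of_lt hk
    have hsub01 : Icc ((k:ℝ)/N) (((k:ℝ)+1)/N) ⊆ Icc (0:ℝ) 1 := by
      apply Icc_subset_Icc
      · exact div_nonneg k.cast_nonneg hNpos.le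
      · exact (div_le_one hNpos).mpr hkR
    have hK : IsCompact (seg p q '' Icc ((k:ℝ)/N) (((k:ℝ)+1)/N)) :=
      isCompact_Icc.image (seg_continuous p q)
    have hKsub : seg p q '' Icc ((k:ℝ)/N) (((k:ℝ)+1)/N) ⊆ (E k).target := by
      rintro _ ⟨t, ht, rfl⟩
      rw [← hφΓq t (hsub01 ht), hEφ k]
      exact (E k).map_source (hEmem k hk t ht)
    obtain ⟨ε, hε, hthick⟩ := hK.exists_thickening_subset_open (E k).open_target hKsub
    refine ⟨ε, hε, ?_⟩
    intro q' hq' t ht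
    apply hthick
    rw [mem_thickening_iff]
    exact ⟨seg p q t, mem_image_of_mem _ ht,
      lt_of_le_of_lt (seg_dist_le p q q' (hsub01 ht)) hq'⟩
  choose! ε hεpos hεspec using hεex
  -- the main induction
  have main : ∀ k : ℕ, k ≤ N → ∃ (W : Set F) (Fk : F → M), W ∈ 𝓝 q ∧ ContinuousAt Fk q ∧
      Fk q = Γ ((k:ℝ)/N) ∧ ∀ q' ∈ W, ∃ Λ : ℝ → M, ContinuousOn Λ (Icc 0 ((k:ℝ)/N)) ∧
        Λ 0 = x₀ ∧ (∀ t ∈ Icc (0:ℝ) ((k:ℝ)/N), φ (Λ t) = seg p q' t) ∧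
        Λ ((k:ℝ)/N) = Fk q' := by
    intro k
    induction k with
    | zero =>
      intro _
      simp only [Nat.cast_zero, zero_div]
      refine ⟨univ, fun _ => x₀, univ_mem, continuousAt_const, hΓ0.symm, ?_⟩
      intro q' _
      refine ⟨fun _ => x₀, continuousOn_const, rfl, ?_, rfl⟩
      intro t ht
      have : t = 0 := le_antisymm ht.2 ht.1
      rw [this, seg_zero]
    | succ k ih =>
      intro hk1
      have hk : k < N := hk1
      have hcast : ((k+1:ℕ):ℝ) = (k:ℝ) + 1 := by push_cast; ring
      rw [hcast]
      obtain ⟨W, Fk, hW, hFc, hFq, hlift⟩ := ih (le_of_lt hk)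
      have hkk1 : (k:ℝ)/N ≤ ((k:ℝ)+1)/N := by
        rw [div_le_div_iff_of_pos_right hNpos]; linarith
      have hklt : (k:ℝ)/N < ((k:ℝ)+1)/N := by
        rw [div_lt_div_iff_of_pos_right hNpos]; linarith
      have h0k : (0:ℝ) ≤ (k:ℝ)/N := div_nonneg k.cast_nonneg hNpos.le
      have hk1N : ((k:ℝ)+1)/N ≤ 1 :=
        (div_le_one hNpos).mpr (by exact_mod_cast Nat.succ_le_of_lt hk)
      have hk1mem : ((k:ℝ)+1)/N ∈ Icc (0:ℝ) 1 := ⟨le_trans h0k hkk1, hk1N⟩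
      -- new neighborhood
      set W' := (W ∩ ball q (ε k)) ∩ Fk ⁻¹' (E k).source with hW'def
      have hW' : W' ∈ 𝓝 q := by
        refine inter_mem (inter_mem hW (ball_mem_nhds q (hεpos k hk))) ?_
        apply hFc.preimage_mem_nhds
        apply (E k).open_source.mem_nhds
        rw [hFq]
        exact hEmem k hk _ ⟨le_rfl, hkk1⟩
      -- new endpoint map
      set F' : F → M := fun q' => (E k).symm (seg p q' (((k:ℝ)+1)/N)) with hF'def
      have hsegq : seg p q (((k:ℝ)+1)/N) ∈ (E k).target := by
        rw [← hφΓq _ hk1mem, hEφ k]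
        exact (E k).map_source (hEmem k hk _ ⟨hkk1, le_rfl⟩)
      have hF'c : ContinuousAt F' q := by
        have h2 : ContinuousAt (E k).symm (seg p q (((k:ℝ)+1)/N)) :=
          (E k).symm.continuousAt (by rwa [OpenPartialHomeomorph.symm_source])
        have h3 : ContinuousAt (fun q' : F => seg p q' (((k:ℝ)+1)/N)) q :=
          (seg_continuous_right p (((k:ℝ)+1)/N)).continuousAt
        exact ContinuousAt.comp (x := q) (g := (E k).symm) h2 h3
      have hF'q : F' q = Γ (((k:ℝ)+1)/N) := by
        rw [hF'def]
        simp only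
        rw [← hφΓq _ hk1mem, hEφ k]
        exact (E k).left_inv (hEmem k hk _ ⟨hkk1, le_rfl⟩)
      refine ⟨W', F', hW', hF'c, hF'q, ?_⟩
      intro q' hq'
      obtain ⟨Λ, hΛc, hΛ0, hΛφ, hΛend⟩ := hlift q' hq'.1.1
      have htarget : ∀ t ∈ Icc ((k:ℝ)/N) (((k:ℝ)+1)/N), seg p q' t ∈ (E k).target :=
        hεspec k hk q' (mem_ball.mp hq'.1.2)
      have hgc : ContinuousOn (fun t => (E k).symm (seg p q' t))
          (Icc ((k:ℝ)/N) (((k:ℝ)+1)/N)) :=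
        (E k).continuousOn_symm.comp (seg_continuous p q').continuousOn htarget
      have hbdry : Λ ((k:ℝ)/N) = (E k).symm (seg p q' ((k:ℝ)/N)) := by
        have h1 : φ (Λ ((k:ℝ)/N)) = seg p q' ((k:ℝ)/N) := hΛφ _ ⟨h0k, le_rfl⟩
        rw [← h1, hΛend, hEφ k]
        exact ((E k).left_inv hq'.2).symm
      refine ⟨fun t => if t ≤ (k:ℝ)/N then Λ t else (E k).symm (seg p q' t), ?_, ?_, ?_, ?_⟩
      · exact glue_Icc h0k hkk1 hΛc hgc hbdry
      · simp only [if_pos h0k]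
        exact hΛ0
      · intro t ht
        by_cases hcase : t ≤ (k:ℝ)/N
        · simp only [if_pos hcase]
          exact hΛφ t ⟨ht.1, hcase⟩
        · simp only [if_neg hcase]
          rw [hEφ k]
          exact (E k).right_inv (htarget t ⟨le_of_not_ge hcase, ht.2⟩)
      · simp only [if_neg (not_le.mpr hklt)]
        rfl
  -- conclude
  obtain ⟨W, Fk, hW, hFc, hFq, hlift⟩ := main N le_rfl
  have hNN : ((N:ℕ):ℝ)/(N:ℝ) = 1 := div_self hNpos.ne'
  rw [hNN] at hFq hlift
  have hψF : ∀ q' ∈ W, ψ q' = Fk q' := by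
    intro q' hq'
    obtain ⟨Λ, hΛc, hΛ0, hΛφ, hΛend⟩ := hlift q' hq'
    obtain ⟨Γ', hΓ'c, hΓ'0, hφΓ', hΓ'ψ⟩ := hψ q'
    have hEq : EqOn Γ' Λ (Icc 0 1) := by
      apply lift_unique hφ isPreconnected_Icc hΓ'c hΛc
      · intro t ht
        rw [hφΓ' t ht, hΛφ t ht]
      · exact left_mem_Icc.mpr zero_le_one
      · rw [hΓ'0, hΛ0]
    rw [← hΓ'ψ, hEq (right_mem_Icc.mpr zero_le_one), hΛend]
  have hev : ψ =ᶠ[𝓝 q] Fk := eventually_of_mem hW hψF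
  exact hFc.congr hev.symm

end QCaux



open Manifold

/-- A smooth local diffeomorphism `φ : M → ℝⁿ` from a nonempty connected
smooth `n`-manifold without boundary which has the quasicovering path-lifting extension
property is a diffeomorphism onto `ℝⁿ`. -/
theorem quasicovering_diffeomorph
    (n : ℕ) (hn : 1 ≤ n)
    (M : Type*) [TopologicalSpace M] [T2Space M] [Nonempty M] [ConnectedSpace M]
    [ChartedSpace (EuclideanSpace ℝ (Fin n)) M] [IsManifold (𝓡 n) (⊤ : ℕ∞) M]
    (φ : M → EuclideanSpace ℝ (Fin n))
    (hloc : IsLocalDiffeomorph (𝓡 n) (𝓡 n) (⊤ : ℕ∞) φ)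
    (hext : ∀ γ : ℝ → EuclideanSpace ℝ (Fin n), ContDiffOn ℝ (⊤ : ℕ∞) γ (Set.Icc 0 1) →
      ∀ γt : ℝ → M, ContinuousOn γt (Set.Ico 0 1) →
        (∀ t ∈ Set.Ico (0 : ℝ) 1, φ (γt t) = γ t) →
        ∃ Γ : ℝ → M, ContinuousOn Γ (Set.Icc 0 1) ∧
          ∀ t ∈ Set.Ico (0 : ℝ) 1, Γ t = γt t) :
    ∃ e : Diffeomorph (𝓡 n) (𝓡 n) M (EuclideanSpace ℝ (Fin n)) (⊤ : ℕ∞), ⇑e = φ := by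
  classical
  have hlh : IsLocalHomeomorph φ := hloc.isLocalHomeomorph
  set x₀ : M := Classical.arbitrary M with hx₀
  have hext' : ∀ a b : EuclideanSpace ℝ (Fin n), ∀ γt : ℝ → M,
      ContinuousOn γt (Set.Ico 0 1) →
      (∀ t ∈ Set.Ico (0 : ℝ) 1, φ (γt t) = QCaux.seg a b t) →
      ∃ Γ : ℝ → M, ContinuousOn Γ (Set.Icc 0 1) ∧
        ∀ t ∈ Set.Ico (0 : ℝ) 1, Γ t = γt t := by
    intro a b γt hc hl
    exact hext (QCaux.seg a b) ((QCaux.seg_contDiff a b).contDiffOn) γt hc hl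
  have hlift := QCaux.lift_exists hlh hext' x₀
  choose Γf hΓc hΓ0 hΓφ using hlift
  set ψ : EuclideanSpace ℝ (Fin n) → M := fun q => Γf q 1 with hψdef
  have hψspec : ∀ q' : EuclideanSpace ℝ (Fin n), ∃ Γ : ℝ → M,
      ContinuousOn Γ (Icc 0 1) ∧ Γ 0 = x₀ ∧
      (∀ t ∈ Icc (0:ℝ) 1, φ (Γ t) = QCaux.seg (φ x₀) q' t) ∧ Γ 1 = ψ q' :=
    fun q' => ⟨Γf q', hΓc q', hΓ0 q', hΓφ q', rfl⟩
  have hψcont : Continuous ψ :=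
    continuous_iff_continuousAt.mpr (fun q => QCaux.psi_continuousAt hlh x₀ ψ hψspec q)
  have hφψ : ∀ q, φ (ψ q) = q := by
    intro q
    have := hΓφ q 1 (right_mem_Icc.mpr zero_le_one)
    rwa [QCaux.seg_one] at this
  have hψp : ψ (φ x₀) = x₀ := by
    have hconst : EqOn (Γf (φ x₀)) (fun _ => x₀) (Icc 0 1) := by
      apply QCaux.lift_unique hlh isPreconnected_Icc (hΓc _) continuousOn_const
      · intro t ht
        rw [hΓφ (φ x₀) t ht]
        simp [QCaux.seg]
      · exact left_mem_Icc.mpr zero_le_one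
      · exact hΓ0 _
    exact hconst (right_mem_Icc.mpr zero_le_one)
  have hid : ψ ∘ φ = id := by
    apply (T2Space.isSeparatedMap φ).eq_of_comp_eq hlh.isLocallyInjective
      (hψcont.comp hlh.continuous) continuous_id ?_ x₀ hψp
    funext x
    simp [Function.comp, hφψ]
  have hbij : Function.Bijective φ := by
    constructor
    · intro x y hxy
      have h1 := congrFun hid x
      have h2 := congrFun hid y
      simp only [Function.comp_apply, id_eq] at h1 h2
      rw [← h1, ← h2, hxy]
    · intro q
      exact ⟨ψ q, hφψ q⟩
  exact ⟨IsLocalDiffeomorph.diffeomorphOfBijective hloc hbij, rfl⟩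
end

section
/- Let n ≥ 1, let M be a nonempty connected smooth n-manifold without boundary, and let f : M → ℝⁿ × ℝ be a smooth immersion which is spacelike, i.e. Q(d fₓ(v)) > 0 for every x ∈ M and every nonzero tangent vector v ∈ TₓM, where Q(y,t) = ‖y‖² − t² is the Minkowski quadratic form on ℝⁿ × ℝ. Assume in addition the following length-completeness property: every smooth map w : [0,1) → M for which the Minkowski lengths ∫₀ˢ √(Q((f∘w)′(t))) dt, s < 1, are uniformly bounded admits a continuous extension to a map [0,1] → M. Then the map pr ∘ f : M → ℝⁿ is a quasicovering: it is a local diffeomorphism, and for every smooth path γ : [0,1] → ℝⁿ and every continuous map γ̃ : [0,1) → M satisfying (pr ∘ f) ∘ γ̃ = γ on [0,1), the map γ̃ admits a continuous extension to a map [0,1] → M. -/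
open Manifold Set

noncomputable section

variable {n : ℕ} {M : Type*} [TopologicalSpace M]
  [ChartedSpace (EuclideanSpace ℝ (Fin n)) M] [IsManifold (𝓡 n) (⊤ : ℕ∞) M]

set_option maxHeartbeats 1000000 in
/-- Inverse function theorem for maps from an `n`-manifold to `ℝⁿ`. -/
theorem isLocalDiffeomorphAt_of_mfderiv_injective
    (g : M → EuclideanSpace ℝ (Fin n))
    (hg : ContMDiff (𝓡 n) 𝓘(ℝ, EuclideanSpace ℝ (Fin n)) (⊤ : ℕ∞) g) (x : M)
    (hinj : ∀ y : M, Function.Injective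
      (mfderiv (𝓡 n) 𝓘(ℝ, EuclideanSpace ℝ (Fin n)) g y)) :
    IsLocalDiffeomorphAt (𝓡 n) 𝓘(ℝ, EuclideanSpace ℝ (Fin n)) (⊤ : ℕ∞) g x := by
  set e := extChartAt (𝓡 n) x with he
  set c := chartAt (EuclideanSpace ℝ (Fin n)) x with hc
  set G := g ∘ e.symm with hG
  have hec : ⇑e = ⇑c := by rw [he, hc]; simp [extChartAt_coe]
  have hecs : ⇑e.symm = ⇑c.symm := by rw [he, hc]; simp [extChartAt_coe_symm]
  have hces : c.source = e.source := by rw [he, hc]; simp [extChartAt_source]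
  have hcet : c.target = e.target := by
    rw [he, hc, extChartAt_target]; simp
  have hex : x ∈ e.source := mem_extChartAt_source x
  have hetgt : e x ∈ e.target := e.map_source hex
  have hone : (1 : WithTop ℕ∞) ≤ ((⊤ : ℕ∞) : WithTop ℕ∞) := by exact_mod_cast le_top
  -- G is smooth on `e.target`, with invertible derivative everywhere
  have hGm : ∀ z ∈ e.target, ContMDiffAt (𝓡 n) (𝓡 n) (⊤ : ℕ∞) G z := by
    intro z hz
    have hsymm : ContMDiffAt (𝓡 n) (𝓡 n) (⊤ : ℕ∞) e.symm z := by
      apply (contMDiffOn_extChartAt_symm x).contMDiffAt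
      exact (isOpen_extChartAt_target x).mem_nhds hz
    exact ContMDiffAt.comp z (hg (e.symm z)) hsymm
  have key : ∀ z ∈ e.target, ∃ D' : (EuclideanSpace ℝ (Fin n) ≃L[ℝ] EuclideanSpace ℝ (Fin n)),
      HasFDerivAt G (D' : EuclideanSpace ℝ (Fin n) →L[ℝ] EuclideanSpace ℝ (Fin n)) z := by
    intro z hz
    have hGz : ContDiffAt ℝ ((⊤ : ℕ∞) : WithTop ℕ∞) G z := (hGm z hz).contDiffAt
    have hdiff : DifferentiableAt ℝ G z := hGz.differentiableAt (by simp)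
    set x' := e.symm z with hx'
    have hx's : x' ∈ e.source := e.map_target hz
    have hrinv : e x' = z := e.right_inv hz
    set D : EuclideanSpace ℝ (Fin n) →L[ℝ] EuclideanSpace ℝ (Fin n) := fderiv ℝ G z with hDdef
    have hGdiffm : MDifferentiableAt 𝓘(ℝ, EuclideanSpace ℝ (Fin n))
        𝓘(ℝ, EuclideanSpace ℝ (Fin n)) G (e x') := by
      rw [hrinv]; exact (hGm z hz).mdifferentiableAt (by simp)
    have hediff : MDifferentiableAt (𝓡 n) 𝓘(ℝ, EuclideanSpace ℝ (Fin n)) e x' :=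
      mdifferentiableAt_extChartAt (show x' ∈ c.source from hces.symm ▸ hx's)
    have hev : (G ∘ ⇑e) =ᶠ[nhds x'] g := by
      filter_upwards [(isOpen_extChartAt_source x).mem_nhds hx's] with y hy
      simp only [hG, Function.comp_apply, e.left_inv hy]
    have h6 : mfderiv (𝓡 n) 𝓘(ℝ, EuclideanSpace ℝ (Fin n)) g x' =
        D.comp (mfderiv (𝓡 n) 𝓘(ℝ, EuclideanSpace ℝ (Fin n)) (⇑e) x') := by
      exact ((hev.mfderiv_eq).symm.trans (mfderiv_comp x' hGdiffm hediff)).trans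
        (by rw [hrinv, mfderiv_eq_fderiv]; rfl)
    obtain ⟨De, hDe⟩ := isInvertible_mfderiv_extChartAt (I := 𝓡 n) (x := x)
      (show x' ∈ e.source from hx's)
    have hesurj : Function.Surjective
        (mfderiv (𝓡 n) 𝓘(ℝ, EuclideanSpace ℝ (Fin n)) (⇑e) x') := by
      rw [← hDe]; exact De.surjective
    have hDinj : Function.Injective D := by
      intro a b hab
      obtain ⟨a', rfl⟩ := hesurj a
      obtain ⟨b', rfl⟩ := hesurj b
      have : mfderiv (𝓡 n) 𝓘(ℝ, EuclideanSpace ℝ (Fin n)) g x' a' =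
          mfderiv (𝓡 n) 𝓘(ℝ, EuclideanSpace ℝ (Fin n)) g x' b' := by
        rw [h6]; exact hab
      rw [hinj x' this]
    have hDsurj : Function.Surjective D :=
      (LinearMap.injective_iff_surjective
        (f := (D : EuclideanSpace ℝ (Fin n) →ₗ[ℝ] EuclideanSpace ℝ (Fin n)))).mp hDinj
    refine ⟨ContinuousLinearEquiv.ofBijective D (LinearMap.ker_eq_bot.mpr hDinj)
      (LinearMap.range_eq_top.mpr hDsurj), ?_⟩
    rw [ContinuousLinearEquiv.coe_ofBijective]
    exact hdiff.hasFDerivAt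
  -- construct the local inverse via the inverse function theorem at `e x`
  obtain ⟨D', hGd'⟩ := key (e x) hetgt
  have hGc : ContDiffAt ℝ ((⊤ : ℕ∞) : WithTop ℕ∞) G (e x) := (hGm (e x) hetgt).contDiffAt
  set φ := hGc.toOpenPartialHomeomorph G hGd' (by simp) with hφ
  have hφcoe : (φ : EuclideanSpace ℝ (Fin n) → EuclideanSpace ℝ (Fin n)) = G :=
    hGc.toOpenPartialHomeomorph_coe hGd' (by simp)
  have hφmem : e x ∈ φ.source := hGc.mem_toOpenPartialHomeomorph_source hGd' (by simp)
  set ψ := c.trans φ with hψ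
  have hψcoe : ⇑ψ = ⇑φ ∘ ⇑c := rfl
  have hψsource : ψ.source = c.source ∩ ⇑c ⁻¹' φ.source := by
    rw [hψ, OpenPartialHomeomorph.trans_source]
  have hψtarget : ψ.target = φ.target ∩ ⇑φ.symm ⁻¹' c.target := by
    rw [hψ, OpenPartialHomeomorph.trans_target]
  -- the two smoothness fields
  have smooth₁ : ContMDiffOn (𝓡 n) 𝓘(ℝ, EuclideanSpace ℝ (Fin n)) (⊤ : ℕ∞) (⇑ψ) ψ.source := by
    have heq : EqOn (⇑ψ) g ψ.source := by
      intro w hw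
      have hw1 : w ∈ c.source := (hψsource ▸ hw).1
      have hw2 : w ∈ e.source := hces ▸ hw1
      calc ψ w = G (c w) := by rw [hψcoe]; simp [hφcoe]
        _ = g (e.symm (e w)) := by rw [hG, hec]; rfl
        _ = g w := by rw [e.left_inv hw2]
    exact (hg.contMDiffOn (s := ψ.source)).congr heq
  have smooth₂ : ContMDiffOn 𝓘(ℝ, EuclideanSpace ℝ (Fin n)) (𝓡 n) (⊤ : ℕ∞) (⇑ψ.symm) ψ.target := by
    intro y hy
    have hy1 : y ∈ φ.target := (hψtarget ▸ hy).1
    have hy2 : φ.symm y ∈ c.target := (hψtarget ▸ hy).2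
    have hy2e : φ.symm y ∈ e.target := hcet ▸ hy2
    obtain ⟨D'', hGd''⟩ := key (φ.symm y) hy2e
    have hGsymmAt : ContDiffAt ℝ ((⊤ : ℕ∞) : WithTop ℕ∞) (⇑φ.symm) y := by
      apply φ.contDiffAt_symm hy1
      · rw [hφcoe]; exact hGd''
      · rw [hφcoe]; exact (hGm (φ.symm y) hy2e).contDiffAt
    have hcsAt : ContMDiffAt 𝓘(ℝ, EuclideanSpace ℝ (Fin n)) (𝓡 n) (⊤ : ℕ∞) (⇑e.symm) (φ.symm y) := by
      apply (contMDiffOn_extChartAt_symm x).contMDiffAt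
      exact (isOpen_extChartAt_target x).mem_nhds hy2e
    have hcomp : ContMDiffAt 𝓘(ℝ, EuclideanSpace ℝ (Fin n)) (𝓡 n) (⊤ : ℕ∞) (⇑e.symm ∘ ⇑φ.symm) y :=
      ContMDiffAt.comp y hcsAt hGsymmAt.contMDiffAt
    have : ⇑ψ.symm = ⇑e.symm ∘ ⇑φ.symm := by
      rw [hψ, OpenPartialHomeomorph.trans_symm_eq_symm_trans_symm]; rw [hecs]; rfl
    rw [this]
    exact hcomp.contMDiffWithinAt
  refine ⟨⟨ψ.toPartialEquiv, ψ.open_source, ψ.open_target, smooth₁, smooth₂⟩, ?_, ?_⟩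
  · show x ∈ ψ.source
    rw [hψsource]
    refine ⟨mem_chart_source _ x, ?_⟩
    show c x ∈ φ.source
    have : c x = e x := by rw [← hec]
    rw [this]; exact hφmem
  · intro w hw
    have heq : EqOn (⇑ψ) g ψ.source := by
      intro w hw
      have hw1 : w ∈ c.source := (hψsource ▸ hw).1
      have hw2 : w ∈ e.source := hces ▸ hw1
      calc ψ w = G (c w) := by rw [hψcoe]; simp [hφcoe]
        _ = g (e.symm (e w)) := by rw [hG, hec]; rfl
        _ = g w := by rw [e.left_inv hw2]
    exact (heq hw).symm

end

/-- The Minkowski quadratic form `Q(y,t) = ‖y‖² − t²` on `ℝⁿ × ℝ`. -/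
noncomputable def minkowskiQ (n : ℕ) (p : EuclideanSpace ℝ (Fin n) × ℝ) : ℝ :=
  ‖p.1‖ ^ 2 - p.2 ^ 2

/-- The projection of a spacelike, length-complete immersion of a nonempty
connected smooth `n`-manifold into Minkowski space `ℝⁿ × ℝ` is a quasicovering: a local
diffeomorphism with the path-lifting extension property. -/
theorem spacelike_long_immersion_proj_quasicovering
    (n : ℕ) (hn : 1 ≤ n)
    (M : Type*) [TopologicalSpace M] [T2Space M] [Nonempty M] [ConnectedSpace M]
    [ChartedSpace (EuclideanSpace ℝ (Fin n)) M] [IsManifold (𝓡 n) (⊤ : ℕ∞) M]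
    (f : M → EuclideanSpace ℝ (Fin n) × ℝ)
    (hf : ContMDiff (𝓡 n) 𝓘(ℝ, EuclideanSpace ℝ (Fin n) × ℝ) (⊤ : ℕ∞) f)
    (hspace : ∀ (x : M) (v : TangentSpace (𝓡 n) x), v ≠ 0 →
      0 < minkowskiQ n (mfderiv (𝓡 n) 𝓘(ℝ, EuclideanSpace ℝ (Fin n) × ℝ) f x v))
    (hcomplete : ∀ w : ℝ → M, ContMDiffOn 𝓘(ℝ, ℝ) (𝓡 n) (⊤ : ℕ∞) w (Set.Ico 0 1) →
      (∃ C : ℝ, ∀ s ∈ Set.Ico (0 : ℝ) 1,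
        (∫ t in (0 : ℝ)..s, Real.sqrt (minkowskiQ n (deriv (f ∘ w) t))) ≤ C) →
      ∃ W : ℝ → M, ContinuousOn W (Set.Icc 0 1) ∧
        ∀ t ∈ Set.Ico (0 : ℝ) 1, W t = w t) :
    IsLocalDiffeomorph (𝓡 n) (𝓡 n) (⊤ : ℕ∞) (fun x => (f x).1) ∧
    (∀ γ : ℝ → EuclideanSpace ℝ (Fin n), ContDiffOn ℝ (⊤ : ℕ∞) γ (Set.Icc 0 1) →
      ∀ γt : ℝ → M, ContinuousOn γt (Set.Ico 0 1) →
        (∀ t ∈ Set.Ico (0 : ℝ) 1, (f (γt t)).1 = γ t) →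
        ∃ Γ : ℝ → M, ContinuousOn Γ (Set.Icc 0 1) ∧
          ∀ t ∈ Set.Ico (0 : ℝ) 1, Γ t = γt t) := by
  set g : M → EuclideanSpace ℝ (Fin n) := fun x => (f x).1 with hgdef
  set L : (EuclideanSpace ℝ (Fin n) × ℝ) →L[ℝ] EuclideanSpace ℝ (Fin n) :=
    ContinuousLinearMap.fst ℝ (EuclideanSpace ℝ (Fin n)) ℝ with hL
  have hgsmooth : ContMDiff (𝓡 n) 𝓘(ℝ, EuclideanSpace ℝ (Fin n)) (⊤ : ℕ∞) g :=
    L.contMDiff.comp hf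
  have hgderiv : ∀ y : M, mfderiv (𝓡 n) 𝓘(ℝ, EuclideanSpace ℝ (Fin n)) g y =
      L.comp (mfderiv (𝓡 n) 𝓘(ℝ, EuclideanSpace ℝ (Fin n) × ℝ) f y) := by
    intro y
    have h1 := mfderiv_comp (I' := 𝓘(ℝ, EuclideanSpace ℝ (Fin n) × ℝ)) y
      (L.mdifferentiableAt) ((hf y).mdifferentiableAt (by simp))
    rw [L.mfderiv_eq] at h1
    exact h1
  have hginj : ∀ y : M, Function.Injective
      (mfderiv (𝓡 n) 𝓘(ℝ, EuclideanSpace ℝ (Fin n)) g y) := by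
    intro y a b hab
    by_contra hne
    have hv : a - b ≠ 0 := sub_ne_zero.mpr hne
    have h2 := hspace y (a - b) hv
    have h3 : (mfderiv (𝓡 n) 𝓘(ℝ, EuclideanSpace ℝ (Fin n) × ℝ) f y (a - b)).1 = 0 := by
      have h5 : mfderiv (𝓡 n) 𝓘(ℝ, EuclideanSpace ℝ (Fin n)) g y (a - b) = 0 := by
        rw [map_sub, hab, sub_self]
      rw [hgderiv y] at h5
      exact h5
    unfold minkowskiQ at h2; rw [h3] at h2
    simp at h2
    nlinarith [sq_nonneg (mfderiv (𝓡 n) 𝓘(ℝ, EuclideanSpace ℝ (Fin n) × ℝ) f y (a - b)).2]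
  have part1 : IsLocalDiffeomorph (𝓡 n) (𝓡 n) (⊤ : ℕ∞) g :=
    fun y => isLocalDiffeomorphAt_of_mfderiv_injective g hgsmooth y hginj
  refine ⟨part1, ?_⟩
  intro γ hγ γt hγt hproj
  -- Step A: the lift `γt` is smooth on `Ico 0 1`
  have hw : ContMDiffOn 𝓘(ℝ, ℝ) (𝓡 n) (⊤ : ℕ∞) γt (Set.Ico 0 1) := by
    intro t0 ht0
    obtain ⟨Φ, hxΦ, hEq⟩ := part1 (γt t0)
    have hγval : Φ (γt t0) = γ t0 := by
      rw [← hEq hxΦ]; exact hproj t0 ht0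
    have hγsm : ContMDiffWithinAt 𝓘(ℝ, ℝ) 𝓘(ℝ, EuclideanSpace ℝ (Fin n)) (⊤ : ℕ∞) γ
        (Set.Ico 0 1) t0 := by
      apply contMDiffWithinAt_iff_contDiffWithinAt.mpr
      exact ((hγ.of_le (by simp)) t0 (mem_Icc_of_Ico ht0)).mono Ico_subset_Icc_self
    have hγmem : γ t0 ∈ Φ.target := by
      rw [← hγval]; exact Φ.toPartialEquiv.map_source hxΦ
    have hΦsymmAt : ContMDiffAt 𝓘(ℝ, EuclideanSpace ℝ (Fin n)) (𝓡 n) (⊤ : ℕ∞) Φ.symm (γ t0) := by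
      apply (Φ.contMDiffOn_invFun).contMDiffAt
      exact Φ.open_target.mem_nhds hγmem
    have hcomp : ContMDiffWithinAt 𝓘(ℝ, ℝ) (𝓡 n) (⊤ : ℕ∞) (Φ.symm ∘ γ) (Set.Ico 0 1) t0 :=
      ContMDiffAt.comp_contMDiffWithinAt t0 hΦsymmAt hγsm
    have hev : γt =ᶠ[nhdsWithin t0 (Set.Ico 0 1)] (Φ.symm ∘ γ) := by
      have h8 : ∀ᶠ t in nhdsWithin t0 (Set.Ico 0 1), γt t ∈ Φ.source :=
        (hγt t0 ht0).preimage_mem_nhdsWithin (Φ.open_source.mem_nhds hxΦ)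
      filter_upwards [h8, self_mem_nhdsWithin] with t ht hts
      have h9 : Φ (γt t) = γ t := by rw [← hEq ht]; exact hproj t hts
      have h10 : Φ.toPartialEquiv.symm (Φ (γt t)) = γt t := Φ.toPartialEquiv.left_inv ht
      rw [Function.comp_apply, ← h9]
      exact h10.symm
    have heq0 : γt t0 = (Φ.symm ∘ γ) t0 := by
      have h10 : Φ.toPartialEquiv.symm (Φ (γt t0)) = γt t0 := Φ.toPartialEquiv.left_inv hxΦ
      rw [Function.comp_apply, ← hγval]
      exact h10.symm
    exact (hcomp.congr_of_eventuallyEq hev heq0 : _)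
  -- Step B: the Minkowski length of `f ∘ γt` is bounded
  have hFsm : ContMDiffOn 𝓘(ℝ, ℝ) 𝓘(ℝ, EuclideanSpace ℝ (Fin n) × ℝ) (⊤ : ℕ∞) (f ∘ γt)
      (Set.Ico 0 1) := hf.comp_contMDiffOn hw
  have hFc : ContDiffOn ℝ ((⊤ : ℕ∞) : WithTop ℕ∞) (f ∘ γt) (Set.Ico 0 1) :=
    contMDiffOn_iff_contDiffOn.mp hFsm
  have hγ1 : ContDiffOn ℝ ((1 : ℕ∞) : WithTop ℕ∞) γ (Set.Icc 0 1) := hγ.of_le (by simp)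
  have hdc : ContinuousOn (derivWithin γ (Set.Icc 0 1)) (Set.Icc 0 1) :=
    hγ1.continuousOn_derivWithin (uniqueDiffOn_Icc zero_lt_one) le_rfl
  obtain ⟨C, hCb⟩ := isCompact_Icc.exists_bound_of_continuousOn hdc
  have hC0 : 0 ≤ C := le_trans (norm_nonneg _) (hCb 0 (by constructor <;> norm_num))
  have hbound : ∀ t ∈ Set.Ioo (0 : ℝ) 1,
      Real.sqrt (minkowskiQ n (deriv (f ∘ γt) t)) ≤ C := by
    intro t ht
    have hnb : Set.Icc (0 : ℝ) 1 ∈ nhds t := Icc_mem_nhds ht.1 ht.2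
    have hnb' : Set.Ico (0 : ℝ) 1 ∈ nhds t := Ico_mem_nhds ht.1 ht.2
    have htIco : t ∈ Set.Ico (0 : ℝ) 1 := ⟨le_of_lt ht.1, ht.2⟩
    have hFdiff : DifferentiableAt ℝ (f ∘ γt) t := by
      have := (hFc t htIco).differentiableWithinAt (by simp)
      exact this.differentiableAt hnb'
    -- the first component of the derivative is `deriv γ t`
    have hfstF : HasDerivAt (fun u => ((f ∘ γt) u).1) (deriv (f ∘ γt) t).1 t := by
      have h11 := (ContinuousLinearMap.fst ℝ (EuclideanSpace ℝ (Fin n)) ℝ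
        ).hasFDerivAt.comp_hasDerivAt t hFdiff.hasDerivAt
      exact h11
    have hγderiv : HasDerivAt γ (deriv (f ∘ γt) t).1 t := by
      apply hfstF.congr_of_eventuallyEq
      filter_upwards [hnb'] with u hu
      exact (hproj u hu).symm
    have hγd : deriv γ t = (deriv (f ∘ γt) t).1 := hγderiv.deriv
    have hγdW : derivWithin γ (Set.Icc 0 1) t = deriv γ t := derivWithin_of_mem_nhds hnb
    have hQle : minkowskiQ n (deriv (f ∘ γt) t) ≤ ‖(deriv (f ∘ γt) t).1‖ ^ 2 := by
      rw [minkowskiQ]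
      nlinarith [sq_nonneg (deriv (f ∘ γt) t).2]
    calc Real.sqrt (minkowskiQ n (deriv (f ∘ γt) t))
        ≤ Real.sqrt (‖(deriv (f ∘ γt) t).1‖ ^ 2) := Real.sqrt_le_sqrt hQle
      _ = ‖(deriv (f ∘ γt) t).1‖ := by
          rw [Real.sqrt_sq (norm_nonneg _)]
      _ = ‖derivWithin γ (Set.Icc 0 1) t‖ := by rw [hγdW, hγd]
      _ ≤ C := hCb t (Set.mem_Icc_of_Ioo ht)
  have hlen : ∃ C' : ℝ, ∀ s ∈ Set.Ico (0 : ℝ) 1,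
      (∫ t in (0 : ℝ)..s, Real.sqrt (minkowskiQ n (deriv (f ∘ γt) t))) ≤ C' := by
    refine ⟨C, fun s hs => ?_⟩
    rw [intervalIntegral.integral_of_le hs.1]
    have hsub : Set.Ioc (0 : ℝ) s ⊆ Set.Ioo (0 : ℝ) 1 := fun u hu =>
      ⟨hu.1, lt_of_le_of_lt hu.2 hs.2⟩
    have hnorm : ∀ u ∈ Set.Ioc (0 : ℝ) s,
        ‖Real.sqrt (minkowskiQ n (deriv (f ∘ γt) u))‖ ≤ C := by
      intro u hu
      rw [Real.norm_eq_abs, abs_of_nonneg (Real.sqrt_nonneg _)]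
      exact hbound u (hsub hu)
    have hμ : MeasureTheory.volume (Set.Ioc (0 : ℝ) s) < ⊤ := by
      rw [Real.volume_Ioc]; exact ENNReal.ofReal_lt_top
    have h12 := MeasureTheory.norm_setIntegral_le_of_norm_le_const hμ
      hnorm
    have h13 : (MeasureTheory.volume (Set.Ioc (0 : ℝ) s)).toReal ≤ 1 := by
      rw [Real.volume_Ioc, ENNReal.toReal_ofReal_eq_iff.mpr]
      · linarith [hs.1, hs.2.le]
      · linarith [hs.1]
    calc (∫ t in Set.Ioc (0 : ℝ) s, Real.sqrt (minkowskiQ n (deriv (f ∘ γt) t)))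
        ≤ ‖∫ t in Set.Ioc (0 : ℝ) s, Real.sqrt (minkowskiQ n (deriv (f ∘ γt) t))‖ :=
          le_abs_self _
      _ ≤ C * (MeasureTheory.volume (Set.Ioc (0 : ℝ) s)).toReal := h12
      _ ≤ C * 1 := by
          exact mul_le_mul_of_nonneg_left h13 hC0
      _ = C := mul_one C
  obtain ⟨W, hWc, hWeq⟩ := hcomplete γt hw hlen
  exact ⟨W, hWc, hWeq⟩
end

section
/- Let n ≥ 1, let M be a nonempty connected smooth n-manifold without boundary, and let f : M → ℝⁿ × ℝ be a smooth immersion which is spacelike, i.e. Q(d fₓ(v)) > 0 for every x ∈ M and every nonzero tangent vector v ∈ TₓM, where Q(y,t) = ‖y‖² − t² is the Minkowski quadratic form on ℝⁿ × ℝ. Assume the length-completeness property: every smooth map w : [0,1) → M for which the Minkowski lengths ∫₀ˢ √(Q((f∘w)′(t))) dt, s < 1, are uniformly bounded admits a continuous extension to a map [0,1] → M. Then f is a smooth embedding of M into ℝⁿ × ℝ, and pr ∘ f : M → ℝⁿ is a diffeomorphism. -/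
open Manifold

/-!
A vector with vanishing spatial part has `Q ≤ 0`, so the differential of `g = pr ∘ f` is
injective, hence invertible, and `g` is a local diffeomorphism by the inverse function theorem.
Since `Q v ≤ ‖pr v‖²`, a lift through `g` of a segment `t ↦ y₀ + t • d` has Minkowski speed at
most `‖d‖`; length completeness thus continues a lift defined on `[0, b)` to `b`, and a
continuity argument lifts every segment issuing from `y₀ = g x₀`. By homotopy lifting for local
homeomorphisms these lifts depend continuously on their end point, which gives a continuous
section `h` of `g`. As `M` is connected and `g` is locally injective, `h ∘ g = id`, so `g` is a
bijective local diffeomorphism, i.e. a diffeomorphism, and `f` is an embedding because `pr ∘ f` is.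
-/

open Set Function Topology

theorem ContinuousLinearMap.isInvertible_of_injective {𝕜 V : Type*} [NontriviallyNormedField 𝕜]
    [CompleteSpace 𝕜] [NormedAddCommGroup V] [NormedSpace 𝕜 V] [FiniteDimensional 𝕜 V]
    {L : V →L[𝕜] V} (hL : Injective L) : L.IsInvertible :=
  ⟨(LinearEquiv.ofInjectiveEndo (L : V →ₗ[𝕜] V) hL).toContinuousLinearEquiv, rfl⟩

section InverseFunctionTheorem

variable {𝕜 : Type*} [RCLike 𝕜] {E : Type*} [NormedAddCommGroup E] [NormedSpace 𝕜 E]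
  {F : Type*} [NormedAddCommGroup F] [NormedSpace 𝕜 F] {n : WithTop ℕ∞}

theorem isLocalDiffeomorphAt_of_hasFDerivAt_equiv [CompleteSpace E] {φ : E → F} {U : Set E}
    (hU : IsOpen U) (hn : n ≠ 0) (hφ : ContDiffOn 𝕜 n φ U)
    (hφ' : ∀ z ∈ U, ∃ D : E ≃L[𝕜] F, HasFDerivAt φ (D : E →L[𝕜] F) z) {a : E} (ha : a ∈ U) :
    IsLocalDiffeomorphAt 𝓘(𝕜, E) 𝓘(𝕜, F) n φ a := by
  obtain ⟨D, hD⟩ := hφ' a ha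
  let P := ((hφ.contDiffAt (hU.mem_nhds ha)).toOpenPartialHomeomorph φ hD hn).restrOpen U hU
  have hPU : P.source ⊆ U := inter_subset_right
  refine ⟨⟨P.toPartialEquiv, P.open_source, P.open_target, (hφ.mono hPU).contMDiffOn,
      fun y hy ↦ ?_⟩, ⟨ContDiffAt.mem_toOpenPartialHomeomorph_source _ hD hn, ha⟩,
      fun _ _ ↦ rfl⟩
  have hyU : P.symm y ∈ U := hPU (P.map_target hy)
  obtain ⟨Dy, hDy⟩ := hφ' _ hyU
  exact (P.contDiffAt_symm hy hDy (hφ.contDiffAt (hU.mem_nhds hyU))).contMDiffAt.contMDiffWithinAt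

variable {M : Type*} [TopologicalSpace M] [ChartedSpace E M]

def chartPartialDiffeomorph [IsManifold 𝓘(𝕜, E) n M] (x : M) :
    PartialDiffeomorph 𝓘(𝕜, E) 𝓘(𝕜, E) M E n where
  toPartialEquiv := (chartAt E x).toPartialEquiv
  open_source := (chartAt E x).open_source
  open_target := (chartAt E x).open_target
  contMDiffOn_toFun := contMDiffOn_chart
  contMDiffOn_invFun := contMDiffOn_chart_symm

theorem hasFDerivAt_comp_chartAt_symm [IsManifold 𝓘(𝕜, E) 1 M] {g : M → F} {x : M} {z : E}
    (hg : MDifferentiableAt 𝓘(𝕜, E) 𝓘(𝕜, F) g ((chartAt E x).symm z))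
    (hz : z ∈ (chartAt E x).target) :
    HasFDerivAt (g ∘ (chartAt E x).symm)
      ((mfderiv 𝓘(𝕜, E) 𝓘(𝕜, F) g ((chartAt E x).symm z)).comp
        (mfderiv 𝓘(𝕜, E) 𝓘(𝕜, E) (chartAt E x).symm z)) z := by
  have hsymm : MDifferentiableAt 𝓘(𝕜, E) 𝓘(𝕜, E) (chartAt E x).symm z :=
    mdifferentiableAt_atlas_symm (chart_mem_atlas E x) hz
  have hcomp := mfderiv_comp z hg hsymm
  rw [mfderiv_eq_fderiv] at hcomp
  exact hcomp ▸ (hg.comp z hsymm).differentiableAt.hasFDerivAt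

theorem isInvertible_mfderiv_chartAt_symm [IsManifold 𝓘(𝕜, E) 1 M] {x : M} {z : E}
    (hz : z ∈ (chartAt E x).target) :
    (mfderiv 𝓘(𝕜, E) 𝓘(𝕜, E) (chartAt E x).symm z).IsInvertible := by
  have h := isInvertible_mfderivWithin_extChartAt_symm (I := 𝓘(𝕜, E)) (x := x) (by simpa using hz)
  simp only [extChartAt_coe_symm, modelWithCornersSelf_coe_symm, comp_id, modelWithCornersSelf_coe,
    range_id, mfderivWithin_univ] at h
  exact h

theorem isLocalDiffeomorph_of_isInvertible_mfderiv [CompleteSpace E] [IsManifold 𝓘(𝕜, E) n M]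
    (hn : 1 ≤ n) {g : M → F} (hg : ContMDiff 𝓘(𝕜, E) 𝓘(𝕜, F) n g)
    (hg' : ∀ x, (mfderiv 𝓘(𝕜, E) 𝓘(𝕜, F) g x).IsInvertible) :
    IsLocalDiffeomorph 𝓘(𝕜, E) 𝓘(𝕜, F) n g := by
  intro x
  have : IsManifold 𝓘(𝕜, E) 1 M := .of_le hn
  have hn0 : n ≠ 0 := (zero_lt_one.trans_le hn).ne'
  set φ := chartAt E x
  have hderiv (z : E) (hz : z ∈ φ.target) :
      ∃ D : E ≃L[𝕜] F, HasFDerivAt (g ∘ φ.symm) (D : E →L[𝕜] F) z := by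
    obtain ⟨D, hD⟩ := (hg' _).comp (isInvertible_mfderiv_chartAt_symm hz)
    exact ⟨D, hD ▸ hasFDerivAt_comp_chartAt_symm ((hg _).mdifferentiableAt hn0) hz⟩
  obtain ⟨Ψ, hxΨ, hΨ⟩ := isLocalDiffeomorphAt_of_hasFDerivAt_equiv φ.open_target hn0
    (hg.comp_contMDiffOn contMDiffOn_chart_symm).contDiffOn hderiv (mem_chart_target E x)
  refine ⟨(chartPartialDiffeomorph x).trans Ψ, ⟨mem_chart_source E x, hxΨ⟩, fun y hy ↦ ?_⟩
  have hyΨ : φ y ∈ Ψ.source := hy.2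
  show g y = Ψ (φ y)
  rw [← hΨ hyΨ, comp_apply, φ.left_inv hy.1]

end InverseFunctionTheorem

theorem IsLocalDiffeomorph.contMDiffOn_of_eqOn_comp {𝕜 : Type*} [NontriviallyNormedField 𝕜]
    {E F G : Type*} [NormedAddCommGroup E] [NormedSpace 𝕜 E] [NormedAddCommGroup F]
    [NormedSpace 𝕜 F] [NormedAddCommGroup G] [NormedSpace 𝕜 G]
    {H H' H'' : Type*} [TopologicalSpace H] [TopologicalSpace H'] [TopologicalSpace H'']
    {I : ModelWithCorners 𝕜 E H} {J : ModelWithCorners 𝕜 F H'} {K : ModelWithCorners 𝕜 G H''}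
    {M N P : Type*} [TopologicalSpace M] [ChartedSpace H M] [TopologicalSpace N]
    [ChartedSpace H' N] [TopologicalSpace P] [ChartedSpace H'' P] {n : WithTop ℕ∞}
    {g : M → N} (hg : IsLocalDiffeomorph I J n g) {γ : P → M} {q : P → N} {s : Set P}
    (hq : ContMDiffOn K J n q s) (hγ : ContinuousOn γ s) (hgγ : EqOn (g ∘ γ) q s) :
    ContMDiffOn K I n γ s := by
  intro t ht
  have hγt := hg (γ t)
  have hqt : g (γ t) = q t := hgγ ht
  have hinv : ContMDiffWithinAt K I n (hγt.localInverse ∘ q) s t :=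
    (hqt ▸ hγt.localInverse_contMDiffAt).comp_contMDiffWithinAt t (hq t ht)
  refine hinv.congr_of_eventuallyEq ?_ ?_
  · filter_upwards [(hγ t ht).eventually hγt.localInverse_eventuallyEq_left, self_mem_nhdsWithin]
      with u hu hus
    rw [comp_apply, ← hgγ hus]
    exact hu.symm
  · rw [comp_apply, ← hqt]
    exact (hγt.localInverse_left_inv hγt.localInverse_mem_target).symm

section Lifting

variable {M X : Type*} [TopologicalSpace M]

def IsLiftOn (g : M → X) (p : ℝ → X) (x₀ : M) (s : Set ℝ) (γ : ℝ → M) : Prop :=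
  ContinuousOn γ s ∧ γ 0 = x₀ ∧ ∀ t ∈ s, g (γ t) = p t

variable {g : M → X} {p : ℝ → X} {x₀ : M} {s t : Set ℝ} {γ γ' : ℝ → M}

theorem IsLiftOn.mono (h : IsLiftOn g p x₀ s γ) (hts : t ⊆ s) : IsLiftOn g p x₀ t γ :=
  ⟨h.1.mono hts, h.2.1, fun u hu ↦ h.2.2 u (hts hu)⟩

variable [TopologicalSpace X]

theorem IsLiftOn.eqOn [T2Space M] (hg : IsLocalHomeomorph g) (hs : IsPreconnected s)
    (h0 : 0 ∈ s) (h : IsLiftOn g p x₀ s γ) (h' : IsLiftOn g p x₀ s γ') : EqOn γ γ' s :=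
  (T2Space.isSeparatedMap g).eqOn_of_comp_eqOn hg.isLocallyInjective hs h.1 h'.1
    (fun t ht ↦ (h.2.2 t ht).trans (h'.2.2 t ht).symm) h0 (h.2.1.trans h'.2.1.symm)

theorem IsLiftOn.exists_Icc_extension (hg : IsLocalHomeomorph g) (hp : Continuous p) {b : ℝ}
    (hb : 0 ≤ b) (h : IsLiftOn g p x₀ (Icc 0 b) γ) :
    ∃ c > b, ∃ γ', IsLiftOn g p x₀ (Icc 0 c) γ' := by
  obtain ⟨P, hbP, rfl⟩ := hg (γ b)
  have hPγb : P (γ b) = p b := h.2.2 b ⟨hb, le_rfl⟩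
  obtain ⟨c, hbc, hc⟩ := mem_nhdsGE_iff_exists_Icc_subset.1 <| mem_nhdsWithin_of_mem_nhds <|
    hp.continuousAt.preimage_mem_nhds (P.open_target.mem_nhds (hPγb ▸ P.map_source hbP))
  have hseam : γ b = P.symm (p b) := by rw [← hPγb, P.left_inv hbP]
  refine ⟨c, hbc, fun u ↦ if u ≤ b then γ u else P.symm (p u), ?_, by simp [hb, h.2.1],
    fun u hu ↦ ?_⟩
  · rw [← Icc_union_Icc_eq_Icc hb hbc.le]
    refine ContinuousOn.union_of_isClosed ?_ ?_ isClosed_Icc isClosed_Icc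
    · exact h.1.congr fun u hu ↦ if_pos hu.2
    · refine (P.continuousOn_symm.comp hp.continuousOn hc).congr fun u hu ↦ ?_
      rcases hu.1.eq_or_lt with rfl | hbu
      · simp [hseam]
      · exact if_neg (not_le.2 hbu)
  · by_cases hub : u ≤ b
    · simp only [hub, if_true, h.2.2 u ⟨hu.1, hub⟩]
    · simp only [hub, if_false, P.right_inv (hc ⟨(not_le.1 hub).le, hu.2⟩)]

theorem exists_isLiftOn_Ico_of_forall_lt [T2Space M] (hg : IsLocalHomeomorph g) {b : ℝ}
    (hb : 0 < b) (h : ∀ s ∈ Ico 0 b, ∃ γ, IsLiftOn g p x₀ (Icc 0 s) γ) :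
    ∃ Γ, IsLiftOn g p x₀ (Ico 0 b) Γ := by
  have : Nonempty M := ⟨x₀⟩
  choose! γ hγ using h
  have hagree {m : ℝ} (hm : m ∈ Ico 0 b) : EqOn (fun s ↦ γ s s) (γ m) (Icc 0 m) := fun s hs ↦
    IsLiftOn.eqOn hg isPreconnected_Icc ⟨le_rfl, hs.1⟩ (hγ s ⟨hs.1, hs.2.trans_lt hm.2⟩)
      ((hγ m hm).mono (Icc_subset_Icc_right hs.2)) ⟨hs.1, le_rfl⟩
  refine ⟨fun s ↦ γ s s, fun s hs ↦ ?_, (hγ 0 ⟨le_rfl, hb⟩).2.1,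
    fun s hs ↦ (hγ s hs).2.2 s ⟨hs.1, le_rfl⟩⟩
  obtain ⟨m, hsm, hmb⟩ := exists_between hs.2
  have hm : m ∈ Ico 0 b := ⟨hs.1.trans hsm.le, hmb⟩
  rw [← continuousWithinAt_inter (Iio_mem_nhds hsm)]
  exact ((hγ m hm).1 s ⟨hs.1, hsm.le⟩).mono (fun u hu ↦ ⟨hu.1.1, hu.2.le⟩) |>.congr
    (fun u hu ↦ hagree hm ⟨hu.1.1, hu.2.le⟩) (hagree hm ⟨hs.1, hsm.le⟩)

theorem IsLiftOn.of_continuousOn_Icc [T2Space X] (hg : Continuous g) (hp : Continuous p)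
    {b : ℝ} (hb : 0 < b) (hγ : IsLiftOn g p x₀ (Ico 0 b) γ) (hγ' : ContinuousOn γ' (Icc 0 b))
    (heq : EqOn γ' γ (Ico 0 b)) : IsLiftOn g p x₀ (Icc 0 b) γ' :=
  ⟨hγ', (heq ⟨le_rfl, hb⟩).trans hγ.2.1,
    EqOn.of_subset_closure (f := g ∘ γ') (fun t ht ↦ (congrArg g (heq ht)).trans (hγ.2.2 t ht))
      (hg.comp_continuousOn hγ') hp.continuousOn Ico_subset_Icc_self (closure_Ico hb.ne).ge⟩

theorem exists_isLiftOn_Icc_one [T2Space M] [T2Space X] (hg : IsLocalHomeomorph g)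
    (hp : Continuous p) (h0 : g x₀ = p 0)
    (hext : ∀ b ∈ Ioc (0 : ℝ) 1, ∀ γ, IsLiftOn g p x₀ (Ico 0 b) γ →
      ∃ γ', ContinuousOn γ' (Icc 0 b) ∧ EqOn γ' γ (Ico 0 b)) :
    ∃ γ, IsLiftOn g p x₀ (Icc 0 1) γ := by
  set A := {s ∈ Icc (0 : ℝ) 1 | ∃ γ, IsLiftOn g p x₀ (Icc 0 s) γ}
  have h0A : 0 ∈ A := ⟨⟨le_rfl, zero_le_one⟩, fun _ ↦ x₀, continuousOn_const, rfl,
    fun t ht ↦ by rwa [le_antisymm ht.2 ht.1]⟩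
  have hbdd : BddAbove A := ⟨1, fun s hs ↦ hs.1.2⟩
  set c := sSup A
  have hc0 : 0 ≤ c := le_csSup hbdd h0A
  have hc1 : c ≤ 1 := csSup_le ⟨0, h0A⟩ fun s hs ↦ hs.1.2
  have hcA : ∃ γ, IsLiftOn g p x₀ (Icc 0 c) γ := by
    rcases hc0.eq_or_lt with hc | hc
    · exact hc ▸ h0A.2
    have hbelow (s : ℝ) (hs : s ∈ Ico 0 c) : ∃ γ, IsLiftOn g p x₀ (Icc 0 s) γ := by
      obtain ⟨a, ⟨-, γ, hγ⟩, hsa⟩ := exists_lt_of_lt_csSup ⟨0, h0A⟩ hs.2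
      exact ⟨γ, hγ.mono (Icc_subset_Icc_right hsa.le)⟩
    obtain ⟨γ, hγ⟩ := exists_isLiftOn_Ico_of_forall_lt hg hc hbelow
    obtain ⟨γ', hγ', heq⟩ := hext c ⟨hc, hc1⟩ γ hγ
    exact ⟨γ', hγ.of_continuousOn_Icc hg.continuous hp hc hγ' heq⟩
  obtain ⟨γ, hγ⟩ := hcA
  rcases hc1.eq_or_lt with hc | hc
  · exact ⟨γ, hc ▸ hγ⟩
  obtain ⟨d, hcd, γ', hγ'⟩ := hγ.exists_Icc_extension hg hp hc0
  have hA : min d 1 ∈ A := ⟨⟨hc0.trans (le_min hcd.le hc.le), min_le_right _ _⟩, γ',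
    hγ'.mono (Icc_subset_Icc_right (min_le_left _ _))⟩
  exact absurd (le_csSup hbdd hA) (not_le.2 (lt_min hcd hc))

theorem bijective_of_forall_isLiftOn_segment [AddCommGroup X] [Module ℝ X]
    [IsTopologicalAddGroup X] [ContinuousSMul ℝ X] [T2Space M] [ConnectedSpace M]
    (hg : IsLocalHomeomorph g) (x₀ : M)
    (hlift : ∀ y, ∃ γ, IsLiftOn g (fun t ↦ g x₀ + t • (y - g x₀)) x₀ (Icc 0 1) γ) :
    Bijective g := by
  choose γ hγ using hlift
  have hsep := T2Space.isSeparatedMap g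
  have hG : Continuous fun q : unitInterval × X ↦ γ q.2 q.1 :=
    hg.continuous_lift hsep ⟨fun q ↦ g x₀ + (q.1 : ℝ) • (q.2 - g x₀), by fun_prop⟩
      (funext fun q ↦ (hγ q.2).2.2 q.1 q.1.2) (by simpa [(hγ _).2.1] using continuous_const)
      fun y ↦ (hγ y).1.comp_continuous continuous_subtype_val fun t ↦ t.2
  set h : X → M := fun y ↦ γ y 1
  have hh : Continuous h :=
    hG.comp ((continuous_const (y := (1 : unitInterval))).prodMk continuous_id)
  have hgh : RightInverse h g := fun y ↦ by
    simpa using (hγ y).2.2 1 ⟨zero_le_one, le_rfl⟩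
  have hhg : h ∘ g = id := hsep.eq_of_comp_eq hg.isLocallyInjective (hh.comp hg.continuous)
    continuous_id (funext fun x ↦ hgh (g x)) (h (g x₀)) (by simp [hgh (g x₀)])
  exact ⟨LeftInverse.injective (congrFun hhg), hgh.surjective⟩

end Lifting

section Minkowski

variable {n : ℕ}

theorem injective_fst_comp_of_minkowskiQ_pos {V : Type*} [AddCommGroup V] [Module ℝ V]
    (L : V →ₗ[ℝ] EuclideanSpace ℝ (Fin n) × ℝ) (hL : ∀ v ≠ 0, 0 < minkowskiQ n (L v)) :
    Injective (LinearMap.fst ℝ _ ℝ ∘ₗ L) := by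
  refine (injective_iff_map_eq_zero _).2 fun v hv ↦ ?_
  by_contra hv0
  have := hL v hv0
  change (L v).1 = 0 at hv
  rw [minkowskiQ, hv, norm_zero] at this
  nlinarith [sq_nonneg (L v).2]

theorem sqrt_minkowskiQ_deriv_le {c : ℝ → EuclideanSpace ℝ (Fin n) × ℝ} {t : ℝ}
    {d : EuclideanSpace ℝ (Fin n)} (h : HasDerivAt (fun u ↦ (c u).1) d t) :
    √(minkowskiQ n (deriv c t)) ≤ ‖d‖ := by
  by_cases hc : DifferentiableAt ℝ c t
  · have hfst : HasDerivAt (fun u ↦ (c u).1) (deriv c t).1 t := hc.hasDerivAt.fst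
    have hd : (deriv c t).1 = d := hfst.unique h
    calc √(minkowskiQ n (deriv c t)) ≤ √(‖(deriv c t).1‖ ^ 2) :=
          Real.sqrt_le_sqrt (sub_le_self _ (sq_nonneg _))
      _ = ‖d‖ := by rw [hd, Real.sqrt_sq (norm_nonneg d)]
  · simp [deriv_zero_of_not_differentiableAt hc, minkowskiQ]

theorem integral_sqrt_minkowskiQ_deriv_le {c : ℝ → EuclideanSpace ℝ (Fin n) × ℝ}
    {a d : EuclideanSpace ℝ (Fin n)} (hc : ∀ t ∈ Ico (0 : ℝ) 1, (c t).1 = a + t • d) {s : ℝ}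
    (hs : s ∈ Ico (0 : ℝ) 1) : ∫ t in (0 : ℝ)..s, √(minkowskiQ n (deriv c t)) ≤ ‖d‖ := by
  have hpt (t : ℝ) (ht : t ∈ uIoc 0 s) : ‖√(minkowskiQ n (deriv c t))‖ ≤ ‖d‖ := by
    rw [uIoc_of_le hs.1] at ht
    rw [Real.norm_of_nonneg (Real.sqrt_nonneg _)]
    have haff : HasDerivAt (fun u : ℝ ↦ a + u • d) d t := by
      simpa using ((hasDerivAt_id t).smul_const d).const_add a
    refine sqrt_minkowskiQ_deriv_le (haff.congr_of_eventuallyEq ?_)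
    filter_upwards [Ioo_mem_nhds ht.1 (ht.2.trans_lt hs.2)] with u hu
    exact hc u ⟨hu.1.le, hu.2⟩
  calc ∫ t in (0 : ℝ)..s, √(minkowskiQ n (deriv c t))
      ≤ ‖∫ t in (0 : ℝ)..s, √(minkowskiQ n (deriv c t))‖ := Real.le_norm_self _
    _ ≤ ‖d‖ * |s - 0| := intervalIntegral.norm_integral_le_of_norm_le_const hpt
    _ ≤ ‖d‖ := by
      rw [sub_zero, abs_of_nonneg hs.1]
      exact mul_le_of_le_one_right (norm_nonneg d) hs.2.le

variable {M : Type*} [TopologicalSpace M] [ChartedSpace (EuclideanSpace ℝ (Fin n)) M]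

theorem isInvertible_mfderiv_fst_of_spacelike {f : M → EuclideanSpace ℝ (Fin n) × ℝ} {x : M}
    (hf : MDifferentiableAt (𝓡 n) 𝓘(ℝ, EuclideanSpace ℝ (Fin n) × ℝ) f x)
    (hspace : ∀ v : TangentSpace (𝓡 n) x, v ≠ 0 →
      0 < minkowskiQ n (mfderiv (𝓡 n) 𝓘(ℝ, EuclideanSpace ℝ (Fin n) × ℝ) f x v)) :
    (mfderiv (𝓡 n) (𝓡 n) (fun y ↦ (f y).1) x).IsInvertible := by
  have hfst := ((ContinuousLinearMap.fst ℝ (EuclideanSpace ℝ (Fin n)) ℝ).hasMFDerivAt.comp x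
    hf.hasMFDerivAt).mfderiv
  rw [show (fun y ↦ (f y).1) = ContinuousLinearMap.fst ℝ _ ℝ ∘ f from rfl, hfst]
  exact ContinuousLinearMap.isInvertible_of_injective (V := EuclideanSpace ℝ (Fin n))
    (injective_fst_comp_of_minkowskiQ_pos (mfderiv (𝓡 n) _ f x).toLinearMap hspace)

def IsLengthComplete (f : M → EuclideanSpace ℝ (Fin n) × ℝ) : Prop :=
  ∀ w : ℝ → M, ContMDiffOn 𝓘(ℝ, ℝ) (𝓡 n) (⊤ : ℕ∞) w (Set.Ico 0 1) →
    (∃ C : ℝ, ∀ s ∈ Set.Ico (0 : ℝ) 1,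
      (∫ t in (0 : ℝ)..s, Real.sqrt (minkowskiQ n (deriv (f ∘ w) t))) ≤ C) →
    ∃ W : ℝ → M, ContinuousOn W (Set.Icc 0 1) ∧ ∀ t ∈ Set.Ico (0 : ℝ) 1, W t = w t

theorem IsLengthComplete.exists_continuousOn_Icc {f : M → EuclideanSpace ℝ (Fin n) × ℝ}
    (hcomplete : IsLengthComplete f)
    (hld : IsLocalDiffeomorph (𝓡 n) (𝓡 n) (⊤ : ℕ∞) fun x ↦ (f x).1) {x₀ : M}
    {d : EuclideanSpace ℝ (Fin n)} {b : ℝ} (hb : 0 < b) {γ : ℝ → M}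
    (hγ : IsLiftOn (fun x ↦ (f x).1) (fun t ↦ (f x₀).1 + t • d) x₀ (Ico 0 b) γ) :
    ∃ γ', ContinuousOn γ' (Icc 0 b) ∧ EqOn γ' γ (Ico 0 b) := by
  have hγsmooth : ContMDiffOn 𝓘(ℝ, ℝ) (𝓡 n) (⊤ : ℕ∞) γ (Ico 0 b) :=
    hld.contMDiffOn_of_eqOn_comp
      (contDiff_const.add (contDiff_id.smul contDiff_const)).contMDiff.contMDiffOn hγ.1 hγ.2.2
  have hmaps : MapsTo (b * ·) (Ico 0 1) (Ico 0 b) := fun t ht ↦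
    ⟨mul_nonneg hb.le ht.1, mul_lt_of_lt_one_right hb ht.2⟩
  have hlength (s : ℝ) (hs : s ∈ Ico (0 : ℝ) 1) :
      ∫ t in (0 : ℝ)..s, √(minkowskiQ n (deriv (f ∘ fun t ↦ γ (b * t)) t)) ≤ ‖b • d‖ :=
    integral_sqrt_minkowskiQ_deriv_le (a := (f x₀).1) (fun t ht ↦
      (hγ.2.2 _ (hmaps ht)).trans (by simp [smul_smul, mul_comm])) hs
  obtain ⟨W, hW, hWeq⟩ := hcomplete (fun t ↦ γ (b * t))
    (hγsmooth.comp (contDiff_const.mul contDiff_id).contMDiff.contMDiffOn hmaps) ⟨_, hlength⟩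
  refine ⟨fun s ↦ W (s / b), hW.comp (continuousOn_id.div_const b) fun s hs ↦
    ⟨div_nonneg hs.1 hb.le, div_le_one_of_le₀ hs.2 hb.le⟩, fun s hs ↦ ?_⟩
  simp only [hWeq _ ⟨div_nonneg hs.1 hb.le, (div_lt_one hb).2 hs.2⟩, mul_div_cancel₀ _ hb.ne']

end Minkowski

theorem spacelike_long_immersion_embedding_general
    (n : ℕ)
    (M : Type*) [TopologicalSpace M] [T2Space M] [ConnectedSpace M]
    [ChartedSpace (EuclideanSpace ℝ (Fin n)) M] [IsManifold (𝓡 n) (⊤ : ℕ∞) M]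
    (f : M → EuclideanSpace ℝ (Fin n) × ℝ)
    (hf : ContMDiff (𝓡 n) 𝓘(ℝ, EuclideanSpace ℝ (Fin n) × ℝ) (⊤ : ℕ∞) f)
    (hspace : ∀ (x : M) (v : TangentSpace (𝓡 n) x), v ≠ 0 →
      0 < minkowskiQ n (mfderiv (𝓡 n) 𝓘(ℝ, EuclideanSpace ℝ (Fin n) × ℝ) f x v))
    (hcomplete : ∀ w : ℝ → M, ContMDiffOn 𝓘(ℝ, ℝ) (𝓡 n) (⊤ : ℕ∞) w (Set.Ico 0 1) →
      (∃ C : ℝ, ∀ s ∈ Set.Ico (0 : ℝ) 1,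
        (∫ t in (0 : ℝ)..s, Real.sqrt (minkowskiQ n (deriv (f ∘ w) t))) ≤ C) →
      ∃ W : ℝ → M, ContinuousOn W (Set.Icc 0 1) ∧
        ∀ t ∈ Set.Ico (0 : ℝ) 1, W t = w t) :
    Topology.IsEmbedding f ∧
    ∃ e : Diffeomorph (𝓡 n) (𝓡 n) M (EuclideanSpace ℝ (Fin n)) (⊤ : ℕ∞),
      ⇑e = fun x => (f x).1 := by
  have hld : IsLocalDiffeomorph (𝓡 n) (𝓡 n) (⊤ : ℕ∞) fun x ↦ (f x).1 :=
    isLocalDiffeomorph_of_isInvertible_mfderiv (by simp)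
      ((ContinuousLinearMap.fst ℝ _ ℝ).contDiff.contMDiff.comp hf) fun x ↦
        isInvertible_mfderiv_fst_of_spacelike ((hf x).mdifferentiableAt (by simp)) (hspace x)
  obtain ⟨x₀⟩ : Nonempty M := inferInstance
  have hbij : Bijective fun x ↦ (f x).1 :=
    bijective_of_forall_isLiftOn_segment hld.isLocalHomeomorph x₀ fun y ↦
      exists_isLiftOn_Icc_one hld.isLocalHomeomorph (by fun_prop) (by simp)
        fun _ hb _ hγ ↦ IsLengthComplete.exists_continuousOn_Icc hcomplete hld hb.1 hγ
  let e := hld.diffeomorphOfBijective hbij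
  exact ⟨.of_comp hf.continuous continuous_fst e.toHomeomorph.isEmbedding, e, rfl⟩

/-- A spacelike, length-complete immersion `f` of a nonempty connected smooth
`n`-manifold into Minkowski space `ℝⁿ × ℝ` is a smooth embedding, and the projection
`pr ∘ f : M → ℝⁿ` is a diffeomorphism. -/
theorem spacelike_long_immersion_embedding
    (n : ℕ) (hn : 1 ≤ n)
    (M : Type*) [TopologicalSpace M] [T2Space M] [Nonempty M] [ConnectedSpace M]
    [ChartedSpace (EuclideanSpace ℝ (Fin n)) M] [IsManifold (𝓡 n) (⊤ : ℕ∞) M]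
    (f : M → EuclideanSpace ℝ (Fin n) × ℝ)
    (hf : ContMDiff (𝓡 n) 𝓘(ℝ, EuclideanSpace ℝ (Fin n) × ℝ) (⊤ : ℕ∞) f)
    (hspace : ∀ (x : M) (v : TangentSpace (𝓡 n) x), v ≠ 0 →
      0 < minkowskiQ n (mfderiv (𝓡 n) 𝓘(ℝ, EuclideanSpace ℝ (Fin n) × ℝ) f x v))
    (hcomplete : ∀ w : ℝ → M, ContMDiffOn 𝓘(ℝ, ℝ) (𝓡 n) (⊤ : ℕ∞) w (Set.Ico 0 1) →
      (∃ C : ℝ, ∀ s ∈ Set.Ico (0 : ℝ) 1,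
        (∫ t in (0 : ℝ)..s, Real.sqrt (minkowskiQ n (deriv (f ∘ w) t))) ≤ C) →
      ∃ W : ℝ → M, ContinuousOn W (Set.Icc 0 1) ∧
        ∀ t ∈ Set.Ico (0 : ℝ) 1, W t = w t) :
    Topology.IsEmbedding f ∧
    ∃ e : Diffeomorph (𝓡 n) (𝓡 n) M (EuclideanSpace ℝ (Fin n)) (⊤ : ℕ∞),
      ⇑e = fun x => (f x).1 :=
  spacelike_long_immersion_embedding_general n M f hf hspace hcomplete
end
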